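/- arXiv:1804.08808 — 8 statements merged into one kernel-verified Lean document; each statement's English description precedes it below -/
import Mathlib

section
/- Let G be an (r,s)-directed hypergraph with all entries of the polynomial form nonnegative. For any p,q,p',q' ≥ 1, |λ_{p,q}(G) − λ_{p',q'}(G)| ≤ |E(G)|·(|p−p'| + |q−q'|). In particular, λ_{p,q}(G) is continuous as a function of (p,q) on [1,∞)^2. -/
structure DirectedHypergraph (m n N r s : ℕ) where
  tail : Fin N → Finset (Fin m)
  head : Fin N → Finset (Fin n)
  tail_card : ∀ e, (tail e).card = r
  head_card : ∀ e, (head e).card = s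

namespace DirectedHypergraph

noncomputable def pnorm {k : ℕ} (p : ℝ) (x : Fin k → ℝ) : ℝ :=
  (∑ i, |x i| ^ p) ^ (1 / p)

variable {m n N r s : ℕ}

noncomputable def polyForm (G : DirectedHypergraph m n N r s)
    (x : Fin m → ℝ) (y : Fin n → ℝ) : ℝ :=
  ∑ e, (∏ u ∈ G.tail e, x u) * ∏ v ∈ G.head e, y v

noncomputable def specRad (G : DirectedHypergraph m n N r s) (p q : ℝ) : ℝ :=
  sSup {z | ∃ x y, pnorm p x = 1 ∧ pnorm q y = 1 ∧ z = G.polyForm x y}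

def outDeg (G : DirectedHypergraph m n N r s) (u : Fin m) : ℕ :=
  (Finset.univ.filter fun e => u ∈ G.tail e).card

def inDeg (G : DirectedHypergraph m n N r s) (v : Fin n) : ℕ :=
  (Finset.univ.filter fun e => v ∈ G.head e).card

end DirectedHypergraph

/-!
Put `a = |x|^p` and `b = |y|^q`; these lie in `[0,1]` when `‖x‖_p = ‖y‖_q = 1`. Then
`|polyForm x y| ≤ ∑_e (∏ a)^(1/p) (∏ b)^(1/q)`, with equality for `x, y ≥ 0`, and the vectors
`|x|^(p/p')`, `|y|^(q/q')` are unit vectors for `(p', q')` whose polynomial form is the same sum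
with exponents `1/p'`, `1/q'`. Hence `λ_{p,q}` and `λ_{p',q'}` are suprema of one family of
sums taken at different exponents, and each summand moves by at most `|p - p'| + |q - q'|`
because `|t^(1/p) - t^(1/p')| ≤ |p - p'|` on `[0, 1]`.
-/

open Finset Real

theorem rpow_sub_rpow_le_div {t a b : ℝ} (ht0 : 0 ≤ t) (ht1 : t ≤ 1) (hb : 0 < b)
    (hba : b ≤ a) : t ^ b - t ^ a ≤ (a - b) / b := by
  rcases ht0.eq_or_lt with rfl | ht0
  · rw [zero_rpow hb.ne', zero_rpow (hb.trans_le hba).ne', sub_self]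
    exact div_nonneg (sub_nonneg.2 hba) hb.le
  have hexp : 1 + (a - b) * log t ≤ t ^ (a - b) := by
    rw [rpow_def_of_pos ht0]
    linarith [add_one_le_exp (log t * (a - b))]
  -- `|u log u| < 1` for `u = t^b ∈ (0, 1]`, and `log u = b log t`.
  have hlog : t ^ b * -log t ≤ 1 / b := by
    have h := abs_log_mul_self_lt (t ^ b) (rpow_pos_of_pos ht0 b) (rpow_le_one ht0.le ht1 hb.le)
    rw [log_rpow ht0] at h
    rw [le_div_iff₀ hb]
    nlinarith [(abs_lt.1 h).1]
  calc t ^ b - t ^ a = t ^ b * (1 - t ^ (a - b)) := by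
        rw [mul_sub, ← rpow_add ht0, mul_one, add_sub_cancel]
    _ ≤ t ^ b * ((a - b) * -log t) := by gcongr; linarith
    _ = (a - b) * (t ^ b * -log t) := by ring
    _ ≤ (a - b) * (1 / b) := by gcongr
    _ = (a - b) / b := by ring

theorem abs_rpow_one_div_sub_rpow_one_div_le {t p p' : ℝ} (ht0 : 0 ≤ t) (ht1 : t ≤ 1)
    (hp : 1 ≤ p) (hp' : 1 ≤ p') : |t ^ (1 / p) - t ^ (1 / p')| ≤ |p - p'| := by
  wlog h : p ≤ p' generalizing p p'
  · rw [abs_sub_comm, abs_sub_comm p]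
    exact this hp' hp (le_of_not_ge h)
  have hexp : 1 / p' ≤ 1 / p := one_div_le_one_div_of_le (by linarith) h
  have hmono : t ^ (1 / p) ≤ t ^ (1 / p') :=
    rpow_le_rpow_of_exponent_ge' ht0 ht1 (by positivity) hexp
  rw [abs_sub_comm, abs_of_nonneg (sub_nonneg.2 hmono), abs_sub_comm,
    abs_of_nonneg (sub_nonneg.2 h)]
  calc t ^ (1 / p') - t ^ (1 / p) ≤ (1 / p - 1 / p') / (1 / p') :=
        rpow_sub_rpow_le_div ht0 ht1 (by positivity) hexp
    _ = (p' - p) / p := by field_simp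
    _ ≤ p' - p := div_le_self (sub_nonneg.2 h) hp

theorem abs_mul_sub_mul_le {a b c d : ℝ} (ha : |a| ≤ 1) (hd : |d| ≤ 1) :
    |a * b - c * d| ≤ |a - c| + |b - d| := by
  calc |a * b - c * d| = |a * (b - d) + (a - c) * d| := by ring_nf
    _ ≤ |a| * |b - d| + |a - c| * |d| := by rw [← abs_mul, ← abs_mul]; exact abs_add_le _ _
    _ ≤ |b - d| + |a - c| :=
        add_le_add (mul_le_of_le_one_left (abs_nonneg _) ha)
          (mul_le_of_le_one_right (abs_nonneg _) hd)
    _ = |a - c| + |b - d| := add_comm _ _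

theorem prod_abs_rpow_div {ι : Type*} (T : Finset ι) (x : ι → ℝ) (p p' : ℝ) :
    ∏ u ∈ T, |x u| ^ (p / p') = (∏ u ∈ T, |x u| ^ p) ^ (1 / p') := by
  rw [← finsetProd_rpow _ _ fun u _ => by positivity]
  refine prod_congr rfl fun u _ => ?_
  rw [← rpow_mul (abs_nonneg _), mul_one_div]

theorem LipschitzOnWith.of_abs_sub_le_mul_add {f : ℝ × ℝ → ℝ} {s : Set (ℝ × ℝ)} {C : NNReal}
    (h : ∀ z ∈ s, ∀ w ∈ s, |f z - f w| ≤ C * (|z.1 - w.1| + |z.2 - w.2|)) :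
    LipschitzOnWith (2 * C) f s := by
  refine LipschitzOnWith.of_dist_le_mul fun z hz w hw => ?_
  have h1 : |z.1 - w.1| ≤ dist z w := by
    rw [← Real.dist_eq, Prod.dist_eq]; exact le_max_left _ _
  have h2 : |z.2 - w.2| ≤ dist z w := by
    rw [← Real.dist_eq, Prod.dist_eq]; exact le_max_right _ _
  rw [Real.dist_eq, NNReal.coe_mul, NNReal.coe_two, mul_comm 2, mul_assoc, two_mul]
  exact (h z hz w hw).trans (by gcongr)

namespace DirectedHypergraph

section UnitVectors

variable {k : ℕ} {p : ℝ} {x : Fin k → ℝ}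

theorem sum_abs_rpow_eq_one (hp : p ≠ 0) (h : pnorm p x = 1) : ∑ i, |x i| ^ p = 1 := by
  have hS : 0 ≤ ∑ i, |x i| ^ p := by positivity
  rw [pnorm] at h
  calc ∑ i, |x i| ^ p = ((∑ i, |x i| ^ p) ^ (1 / p)) ^ p := by
        rw [← rpow_mul hS, one_div_mul_cancel hp, rpow_one]
    _ = 1 := by rw [h, one_rpow]

theorem abs_rpow_mem_Icc (hp : p ≠ 0) (h : pnorm p x = 1) (i : Fin k) :
    |x i| ^ p ∈ Set.Icc (0 : ℝ) 1 :=
  ⟨by positivity, sum_abs_rpow_eq_one hp h ▸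
    single_le_sum (f := fun j => |x j| ^ p) (fun j _ => by positivity) (mem_univ i)⟩

theorem pnorm_abs : pnorm p (fun i => |x i|) = pnorm p x := by
  simp only [pnorm, abs_abs]

theorem pnorm_abs_rpow_div {p' : ℝ} (hp : p ≠ 0) (hp' : p' ≠ 0) (h : pnorm p x = 1) :
    pnorm p' (fun i => |x i| ^ (p / p')) = 1 := by
  have he : ∀ i, |(|x i| ^ (p / p'))| ^ p' = |x i| ^ p := fun i => by
    rw [abs_of_nonneg (by positivity), ← rpow_mul (abs_nonneg _), div_mul_cancel₀ _ hp']
  simp only [pnorm, he, sum_abs_rpow_eq_one hp h, one_rpow]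

end UnitVectors

variable {m n N r s : ℕ} (G : DirectedHypergraph m n N r s)

/-- The polynomial form after the substitution `a = |x|^p`, `b = |y|^q` onto the simplex. -/
noncomputable def powForm (p q : ℝ) (a : Fin m → ℝ) (b : Fin n → ℝ) : ℝ :=
  ∑ e, (∏ u ∈ G.tail e, a u) ^ (1 / p) * (∏ v ∈ G.head e, b v) ^ (1 / q)

theorem polyForm_abs_rpow_div (p p' q q' : ℝ) (x : Fin m → ℝ) (y : Fin n → ℝ) :
    G.polyForm (fun i => |x i| ^ (p / p')) (fun j => |y j| ^ (q / q')) =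
      G.powForm p' q' (fun i => |x i| ^ p) (fun j => |y j| ^ q) := by
  simp only [polyForm, powForm, prod_abs_rpow_div]

theorem polyForm_le_polyForm_abs (x : Fin m → ℝ) (y : Fin n → ℝ) :
    G.polyForm x y ≤ G.polyForm (fun i => |x i|) (fun j => |y j|) :=
  sum_le_sum fun e _ => by
    rw [← abs_prod, ← abs_prod, ← abs_mul]
    exact le_abs_self _

theorem polyForm_le_powForm {p q : ℝ} (hp : p ≠ 0) (hq : q ≠ 0) (x : Fin m → ℝ)
    (y : Fin n → ℝ) :
    G.polyForm x y ≤ G.powForm p q (fun i => |x i| ^ p) (fun j => |y j| ^ q) := by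
  have h := G.polyForm_abs_rpow_div p p q q x y
  simp only [div_self hp, div_self hq, rpow_one] at h
  exact h ▸ G.polyForm_le_polyForm_abs x y

variable {a : Fin m → ℝ} {b : Fin n → ℝ}

theorem powForm_le_card {p q : ℝ} (hp : 0 ≤ p) (hq : 0 ≤ q) (ha : ∀ i, a i ∈ Set.Icc 0 1)
    (hb : ∀ j, b j ∈ Set.Icc 0 1) : G.powForm p q a b ≤ N := by
  have hA : ∀ e, (∏ u ∈ G.tail e, a u) ^ (1 / p) ≤ 1 := fun e =>
    rpow_le_one (prod_nonneg fun u _ => (ha u).1) (prod_le_one (fun u _ => (ha u).1)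
      fun u _ => (ha u).2) (by positivity)
  have hB : ∀ e, (∏ v ∈ G.head e, b v) ^ (1 / q) ≤ 1 := fun e =>
    rpow_le_one (prod_nonneg fun v _ => (hb v).1) (prod_le_one (fun v _ => (hb v).1)
      fun v _ => (hb v).2) (by positivity)
  calc G.powForm p q a b ≤ ∑ _e : Fin N, (1 : ℝ) :=
        sum_le_sum fun e _ =>
          mul_le_one₀ (hA e) (rpow_nonneg (prod_nonneg fun v _ => (hb v).1) _) (hB e)
    _ = N := by simp

theorem abs_powForm_sub_powForm_le {p q p' q' : ℝ} (hp : 1 ≤ p) (hq : 1 ≤ q) (hp' : 1 ≤ p')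
    (hq' : 1 ≤ q') (ha : ∀ i, a i ∈ Set.Icc 0 1) (hb : ∀ j, b j ∈ Set.Icc 0 1) :
    |G.powForm p q a b - G.powForm p' q' a b| ≤ N * (|p - p'| + |q - q'|) := by
  have hA : ∀ e, ∏ u ∈ G.tail e, a u ∈ Set.Icc (0 : ℝ) 1 := fun e =>
    ⟨prod_nonneg fun u _ => (ha u).1, prod_le_one (fun u _ => (ha u).1) fun u _ => (ha u).2⟩
  have hB : ∀ e, ∏ v ∈ G.head e, b v ∈ Set.Icc (0 : ℝ) 1 := fun e =>
    ⟨prod_nonneg fun v _ => (hb v).1, prod_le_one (fun v _ => (hb v).1) fun v _ => (hb v).2⟩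
  have hedge : ∀ e, |(∏ u ∈ G.tail e, a u) ^ (1 / p) * (∏ v ∈ G.head e, b v) ^ (1 / q) -
      (∏ u ∈ G.tail e, a u) ^ (1 / p') * (∏ v ∈ G.head e, b v) ^ (1 / q')| ≤
      |p - p'| + |q - q'| := fun e => by
    obtain ⟨hA0, hA1⟩ := hA e
    obtain ⟨hB0, hB1⟩ := hB e
    refine (abs_mul_sub_mul_le ?_ ?_).trans (add_le_add
      (abs_rpow_one_div_sub_rpow_one_div_le hA0 hA1 hp hp')
      (abs_rpow_one_div_sub_rpow_one_div_le hB0 hB1 hq hq'))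
    · rw [abs_of_nonneg (by positivity)]; exact rpow_le_one hA0 hA1 (by positivity)
    · rw [abs_of_nonneg (by positivity)]; exact rpow_le_one hB0 hB1 (by positivity)
  rw [powForm, powForm, ← sum_sub_distrib]
  calc _ ≤ ∑ e, |(∏ u ∈ G.tail e, a u) ^ (1 / p) * (∏ v ∈ G.head e, b v) ^ (1 / q) -
        (∏ u ∈ G.tail e, a u) ^ (1 / p') * (∏ v ∈ G.head e, b v) ^ (1 / q')| :=
        abs_sum_le_sum_abs _ _
    _ ≤ ∑ _e : Fin N, (|p - p'| + |q - q'|) := sum_le_sum fun e _ => hedge e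
    _ = N * (|p - p'| + |q - q'|) := by
        rw [sum_const, card_univ, Fintype.card_fin, nsmul_eq_mul]

variable {p q : ℝ}

theorem polyForm_le_specRad (hp : 0 < p) (hq : 0 < q) {x : Fin m → ℝ} {y : Fin n → ℝ}
    (hx : pnorm p x = 1) (hy : pnorm q y = 1) : G.polyForm x y ≤ G.specRad p q := by
  refine le_csSup ⟨N, ?_⟩ ⟨x, y, hx, hy, rfl⟩
  rintro _ ⟨x, y, hx, hy, rfl⟩
  exact (G.polyForm_le_powForm hp.ne' hq.ne' x y).trans (G.powForm_le_card hp.le hq.le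
    (abs_rpow_mem_Icc hp.ne' hx) (abs_rpow_mem_Icc hq.ne' hy))

theorem specRad_nonneg (hp : 0 < p) (hq : 0 < q) : 0 ≤ G.specRad p q := by
  rcases Set.eq_empty_or_nonempty
      {z | ∃ x y, pnorm p x = 1 ∧ pnorm q y = 1 ∧ z = G.polyForm x y} with h | ⟨_, x, y, hx, hy, -⟩
  · rw [specRad, h, Real.sSup_empty]
  · refine le_trans ?_ (G.polyForm_le_specRad hp hq (pnorm_abs.trans hx) (pnorm_abs.trans hy))
    exact sum_nonneg fun e _ => by positivity

theorem specRad_le_specRad_add {p' q' : ℝ} (hp : 1 ≤ p) (hq : 1 ≤ q) (hp' : 1 ≤ p')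
    (hq' : 1 ≤ q') : G.specRad p q ≤ G.specRad p' q' + N * (|p - p'| + |q - q'|) := by
  refine Real.sSup_le ?_ (add_nonneg (G.specRad_nonneg (by linarith) (by linarith))
    (by positivity))
  rintro _ ⟨x, y, hx, hy, rfl⟩
  have hp0 : p ≠ 0 := by positivity
  have hq0 : q ≠ 0 := by positivity
  calc G.polyForm x y ≤ G.powForm p q (fun i => |x i| ^ p) (fun j => |y j| ^ q) :=
        G.polyForm_le_powForm hp0 hq0 x y
    _ ≤ G.powForm p' q' (fun i => |x i| ^ p) (fun j => |y j| ^ q) + N * (|p - p'| + |q - q'|) :=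
        sub_le_iff_le_add'.1 (abs_sub_le_iff.1 (G.abs_powForm_sub_powForm_le hp hq hp' hq'
          (abs_rpow_mem_Icc hp0 hx) (abs_rpow_mem_Icc hq0 hy))).1
    _ = G.polyForm (fun i => |x i| ^ (p / p')) (fun j => |y j| ^ (q / q')) +
          N * (|p - p'| + |q - q'|) := by rw [polyForm_abs_rpow_div]
    _ ≤ G.specRad p' q' + N * (|p - p'| + |q - q'|) := by
        gcongr
        exact G.polyForm_le_specRad (by linarith) (by linarith)
          (pnorm_abs_rpow_div hp0 (by positivity) hx) (pnorm_abs_rpow_div hq0 (by positivity) hy)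

end DirectedHypergraph

theorem specRad_lipschitz_continuous_general (m n N r s : ℕ)
    (G : DirectedHypergraph m n N r s) :
    (∀ p q p' q' : ℝ, 1 ≤ p → 1 ≤ q → 1 ≤ p' → 1 ≤ q' →
      |G.specRad p q - G.specRad p' q'| ≤ (N : ℝ) * (|p - p'| + |q - q'|)) ∧
    ContinuousOn (fun pq : ℝ × ℝ => G.specRad pq.1 pq.2)
      {pq : ℝ × ℝ | 1 ≤ pq.1 ∧ 1 ≤ pq.2} := by
  have lipschitz : ∀ p q p' q' : ℝ, 1 ≤ p → 1 ≤ q → 1 ≤ p' → 1 ≤ q' →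
      |G.specRad p q - G.specRad p' q'| ≤ (N : ℝ) * (|p - p'| + |q - q'|) := by
    intro p q p' q' hp hq hp' hq'
    have h := G.specRad_le_specRad_add hp' hq' hp hq
    rw [abs_sub_comm p', abs_sub_comm q'] at h
    exact abs_sub_le_iff.2 ⟨sub_le_iff_le_add'.2 (G.specRad_le_specRad_add hp hq hp' hq'),
      sub_le_iff_le_add'.2 h⟩
  refine ⟨lipschitz, (LipschitzOnWith.of_abs_sub_le_mul_add (C := N) ?_).continuousOn⟩
  rintro ⟨p, q⟩ ⟨hp, hq⟩ ⟨p', q'⟩ ⟨hp', hq'⟩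
  simpa only [NNReal.coe_natCast] using lipschitz p q p' q' hp hq hp' hq'

/-- Lipschitz bound `|λ_{p,q}(G) − λ_{p',q'}(G)| ≤ |E(G)|(|p−p'|+|q−q'|)`, hence
continuity of `λ_{p,q}(G)` in `(p,q)` on `[1,∞)²`. -/
theorem specRad_lipschitz_continuous (m n N r s : ℕ) (hm : 0 < m) (hn : 0 < n)
    (G : DirectedHypergraph m n N r s) :
    (∀ p q p' q' : ℝ, 1 ≤ p → 1 ≤ q → 1 ≤ p' → 1 ≤ q' →
      |G.specRad p q - G.specRad p' q'| ≤ (N : ℝ) * (|p - p'| + |q - q'|)) ∧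
    ContinuousOn (fun pq : ℝ × ℝ => G.specRad pq.1 pq.2)
      {pq : ℝ × ℝ | 1 ≤ pq.1 ∧ 1 ≤ pq.2} :=
  specRad_lipschitz_continuous_general m n N r s G
end

section
/- Let G be an (r,s)-directed hypergraph with |E(G)| arcs, minimum out-degree δ⁺ and minimum in-degree δ⁻. Then λ_{p,q}(G) ≥ |E(G)|^{1−(r/p+s/q)} · (δ⁺/r)^{r/p} · (δ⁻/s)^{s/q}. -/
namespace DHAux

open DirectedHypergraph

lemma sum_rpow_eq_one {k : ℕ} (p : ℝ) (hp : 1 ≤ p) (x : Fin k → ℝ)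
    (h : pnorm p x = 1) : ∑ i, |x i| ^ p = 1 := by
  have hp0 : 0 < p := lt_of_lt_of_le one_pos hp
  have hS : (0:ℝ) ≤ ∑ i, |x i| ^ p :=
    Finset.sum_nonneg fun i _ => Real.rpow_nonneg (abs_nonneg _) _
  have := congrArg (fun z : ℝ => z ^ p) h
  simpa [pnorm, ← Real.rpow_natCast, ← Real.rpow_mul hS, one_div,
    inv_mul_cancel₀ hp0.ne'] using this

lemma abs_le_one {k : ℕ} (p : ℝ) (hp : 1 ≤ p) (x : Fin k → ℝ)
    (h : pnorm p x = 1) (i : Fin k) : |x i| ≤ 1 := by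
  have hp0 : 0 < p := lt_of_lt_of_le one_pos hp
  have hsum := sum_rpow_eq_one p hp x h
  have hle : |x i| ^ p ≤ 1 := by
    rw [← hsum]
    exact Finset.single_le_sum (fun j _ => Real.rpow_nonneg (abs_nonneg _) _)
      (Finset.mem_univ i)
  by_contra hgt
  push_neg at hgt
  have : (1:ℝ) < |x i| ^ p :=
    (Real.one_lt_rpow_iff_of_pos (lt_trans one_pos hgt)).2 (Or.inl ⟨hgt, hp0⟩)
  linarith

lemma polyForm_le {m n N r s : ℕ} (G : DirectedHypergraph m n N r s)
    (p q : ℝ) (hp : 1 ≤ p) (hq : 1 ≤ q) (x : Fin m → ℝ) (y : Fin n → ℝ)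
    (hx : pnorm p x = 1) (hy : pnorm q y = 1) : G.polyForm x y ≤ N := by
  have h1 : ∀ e : Fin N, (∏ u ∈ G.tail e, x u) * ∏ v ∈ G.head e, y v ≤ 1 := by
    intro e
    calc (∏ u ∈ G.tail e, x u) * ∏ v ∈ G.head e, y v
        ≤ |(∏ u ∈ G.tail e, x u) * ∏ v ∈ G.head e, y v| := le_abs_self _
      _ = (∏ u ∈ G.tail e, |x u|) * ∏ v ∈ G.head e, |y v| := by
          rw [abs_mul, Finset.abs_prod, Finset.abs_prod]
      _ ≤ 1 * 1 := by
          apply mul_le_mul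
          · exact Finset.prod_le_one (fun u _ => abs_nonneg _)
              (fun u _ => abs_le_one p hp x hx u)
          · exact Finset.prod_le_one (fun v _ => abs_nonneg _)
              (fun v _ => abs_le_one q hq y hy v)
          · exact Finset.prod_nonneg fun v _ => abs_nonneg _
          · exact zero_le_one
      _ = 1 := one_mul 1
  calc G.polyForm x y ≤ ∑ _e : Fin N, (1:ℝ) := Finset.sum_le_sum fun e _ => h1 e
    _ = N := by simp

lemma bddAbove_set {m n N r s : ℕ} (G : DirectedHypergraph m n N r s)
    (p q : ℝ) (hp : 1 ≤ p) (hq : 1 ≤ q) :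
    BddAbove {z | ∃ x y, pnorm p x = 1 ∧ pnorm q y = 1 ∧ z = G.polyForm x y} := by
  refine ⟨N, fun z hz => ?_⟩
  obtain ⟨x, y, hx, hy, rfl⟩ := hz
  exact polyForm_le G p q hp hq x y hx hy

lemma uniform_pnorm (k : ℕ) (hk : 0 < k) (p : ℝ) (hp : 1 ≤ p) :
    pnorm p (fun _ : Fin k => (k:ℝ) ^ (-(1/p))) = 1 := by
  have hp0 : 0 < p := lt_of_lt_of_le one_pos hp
  have hk0 : (0:ℝ) < k := by exact_mod_cast hk
  have habs : |(k:ℝ) ^ (-(1/p))| = (k:ℝ) ^ (-(1/p)) :=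
    abs_of_nonneg (Real.rpow_nonneg hk0.le _)
  unfold pnorm
  rw [Finset.sum_const]
  simp only [habs, ← Real.rpow_mul hk0.le, Finset.card_univ, Fintype.card_fin, nsmul_eq_mul]
  rw [show (-(1/p))*p = -1 by field_simp, Real.rpow_neg_one, mul_inv_cancel₀ hk0.ne',
    Real.one_rpow]

lemma sum_outDeg {m n N r s : ℕ} (G : DirectedHypergraph m n N r s) :
    ∑ u : Fin m, G.outDeg u = N * r := by
  simp only [outDeg, Finset.card_filter]
  rw [Finset.sum_comm]
  simp [G.tail_card, Finset.sum_ite_mem]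

lemma sum_inDeg {m n N r s : ℕ} (G : DirectedHypergraph m n N r s) :
    ∑ v : Fin n, G.inDeg v = N * s := by
  simp only [inDeg, Finset.card_filter]
  rw [Finset.sum_comm]
  simp [G.head_card, Finset.sum_ite_mem]

end DHAux

open DHAux DirectedHypergraph in
/-- Lower bound for the `(p,q)`-spectral radius in terms of the number of arcs
and the minimum out- and in-degrees:
`λ_{p,q}(G) ≥ |E(G)|^{1−(r/p+s/q)} (δ⁺/r)^{r/p} (δ⁻/s)^{s/q}`. -/
theorem specRad_lower_min_degree (m n N r s : ℕ) (hm : 0 < m) (hn : 0 < n)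
    (hr : 0 < r) (hs : 0 < s)
    (G : DirectedHypergraph m n N r s) (p q : ℝ) (hp : 1 ≤ p) (hq : 1 ≤ q)
    (δp δn : ℕ) (hδp : ∀ u, δp ≤ G.outDeg u) (hδn : ∀ v, δn ≤ G.inDeg v) :
    (N : ℝ) ^ (1 - ((r : ℝ) / p + (s : ℝ) / q)) *
      ((δp : ℝ) / (r : ℝ)) ^ ((r : ℝ) / p) *
      ((δn : ℝ) / (s : ℝ)) ^ ((s : ℝ) / q) ≤ G.specRad p q := by
  have hp0 : 0 < p := lt_of_lt_of_le one_pos hp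
  have hq0 : 0 < q := lt_of_lt_of_le one_pos hq
  have hm0 : (0:ℝ) < m := by exact_mod_cast hm
  have hn0 : (0:ℝ) < n := by exact_mod_cast hn
  have hr0 : (0:ℝ) < r := by exact_mod_cast hr
  have hs0 : (0:ℝ) < s := by exact_mod_cast hs
  set x : Fin m → ℝ := fun _ => (m:ℝ) ^ (-(1/p)) with hxdef
  set y : Fin n → ℝ := fun _ => (n:ℝ) ^ (-(1/q)) with hydef
  have hx : pnorm p x = 1 := uniform_pnorm m hm p hp
  have hy : pnorm q y = 1 := uniform_pnorm n hn q hq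
  have hmem : G.polyForm x y ∈
      {z | ∃ x y, pnorm p x = 1 ∧ pnorm q y = 1 ∧ z = G.polyForm x y} :=
    ⟨x, y, hx, hy, rfl⟩
  have hsup : G.polyForm x y ≤ G.specRad p q :=
    le_csSup (bddAbove_set G p q hp hq) hmem
  -- compute polyForm x y
  have hval : G.polyForm x y
      = N * ((m:ℝ) ^ (-(((r:ℝ))/p)) * (n:ℝ) ^ (-(((s:ℝ))/q))) := by
    unfold polyForm
    have : ∀ e : Fin N, (∏ u ∈ G.tail e, x u) * ∏ v ∈ G.head e, y v
        = (m:ℝ) ^ (-(((r:ℝ))/p)) * (n:ℝ) ^ (-(((s:ℝ))/q)) := by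
      intro e
      rw [Finset.prod_const, Finset.prod_const, G.tail_card, G.head_card,
        ← Real.rpow_natCast ((m:ℝ) ^ (-(1/p))) r,
        ← Real.rpow_natCast ((n:ℝ) ^ (-(1/q))) s,
        ← Real.rpow_mul hm0.le, ← Real.rpow_mul hn0.le]
      ring_nf
    rw [Finset.sum_congr rfl fun e _ => this e, Finset.sum_const, Finset.card_univ,
      Fintype.card_fin, nsmul_eq_mul]
  refine le_trans ?_ (hval ▸ hsup)
  -- now the pure-inequality part
  rcases Nat.eq_zero_or_pos N with hN | hN
  · subst hN
    have hδp0 : δp = 0 := Nat.le_zero.mp (le_trans (hδp ⟨0, hm⟩) (by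
      simp [outDeg]))
    rw [hδp0]
    simp only [Nat.cast_zero, zero_div]
    rw [Real.zero_rpow (by positivity : (r:ℝ)/p ≠ 0)]
    simp
  · have hN0 : (0:ℝ) < N := by exact_mod_cast hN
    have hδpN : (δp:ℝ) / r ≤ (N:ℝ) / m := by
      rw [div_le_div_iff₀ hr0 hm0]
      have h1 : m * δp ≤ N * r := by
        calc m * δp = ∑ _u : Fin m, δp := by simp [mul_comm]
          _ ≤ ∑ u : Fin m, G.outDeg u := Finset.sum_le_sum fun u _ => hδp u
          _ = N * r := sum_outDeg G
      have : (m:ℝ) * δp ≤ (N:ℝ) * r := by exact_mod_cast h1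
      linarith
    have hδnN : (δn:ℝ) / s ≤ (N:ℝ) / n := by
      rw [div_le_div_iff₀ hs0 hn0]
      have h1 : n * δn ≤ N * s := by
        calc n * δn = ∑ _v : Fin n, δn := by simp [mul_comm]
          _ ≤ ∑ v : Fin n, G.inDeg v := Finset.sum_le_sum fun v _ => hδn v
          _ = N * s := sum_inDeg G
      have : (n:ℝ) * δn ≤ (N:ℝ) * s := by exact_mod_cast h1
      linarith
    have h2 : ((δp:ℝ)/r) ^ ((r:ℝ)/p) ≤ ((N:ℝ)/m) ^ ((r:ℝ)/p) :=
      Real.rpow_le_rpow (by positivity) hδpN (by positivity)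
    have h3 : ((δn:ℝ)/s) ^ ((s:ℝ)/q) ≤ ((N:ℝ)/n) ^ ((s:ℝ)/q) :=
      Real.rpow_le_rpow (by positivity) hδnN (by positivity)
    calc (N : ℝ) ^ (1 - ((r : ℝ) / p + (s : ℝ) / q)) *
          ((δp : ℝ) / (r : ℝ)) ^ ((r : ℝ) / p) *
          ((δn : ℝ) / (s : ℝ)) ^ ((s : ℝ) / q)
        ≤ (N : ℝ) ^ (1 - ((r : ℝ) / p + (s : ℝ) / q)) *
          ((N:ℝ)/m) ^ ((r:ℝ)/p) * ((N:ℝ)/n) ^ ((s:ℝ)/q) := by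
          apply mul_le_mul
          · exact mul_le_mul_of_nonneg_left h2 (Real.rpow_nonneg hN0.le _)
          · exact h3
          · positivity
          · positivity
      _ = ((N:ℝ) ^ (1 - ((r:ℝ)/p + (s:ℝ)/q)) * (N:ℝ) ^ ((r:ℝ)/p) * (N:ℝ) ^ ((s:ℝ)/q)) *
            (((m:ℝ) ^ ((r:ℝ)/p))⁻¹ * ((n:ℝ) ^ ((s:ℝ)/q))⁻¹) := by
          rw [Real.div_rpow hN0.le hm0.le, Real.div_rpow hN0.le hn0.le]
          ring
      _ = N * ((m:ℝ) ^ (-(((r:ℝ))/p)) * (n:ℝ) ^ (-(((s:ℝ))/q))) := by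
          rw [← Real.rpow_add hN0, ← Real.rpow_add hN0, Real.rpow_neg hm0.le,
            Real.rpow_neg hn0.le,
            show 1 - ((r:ℝ)/p + (s:ℝ)/q) + (r:ℝ)/p + (s:ℝ)/q = 1 by ring,
            Real.rpow_one]
end

section
/- An (r,s)-directed hypergraph G is anadiplosis connected if and only if the underlying undirected hypergraph of its bipartite split B(G) is connected. -/
/-- A directed hypergraph on a vertex type `V`, with `N` arcs, each arc having a
tail of size `r` and a head of size `s`, disjoint from each other. -/
structure DirHG (V : Type) (N r s : ℕ) where
  tail : Fin N → Finset V
  head : Fin N → Finset V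
  disj : ∀ e, Disjoint (tail e) (head e)
  tail_card : ∀ e, (tail e).card = r
  head_card : ∀ e, (head e).card = s

namespace DirHG

variable {V : Type} {N r s : ℕ}

/-- The `b`-side of an arc: its tail if `b = true`, its head if `b = false`. -/
def side (G : DirHG V N r s) (b : Bool) (e : Fin N) : Finset V :=
  if b then G.tail e else G.head e

/-- `AnaWalk G u bu w bw L` means: the list of arcs `L` is an anadiplosis walk from
`u` (lying in the `bu`-side of the first arc) to `w` (lying in the `bw`-side of the
last arc), where every intermediate vertex lies in the same side (tail or head) of
the two consecutive arcs it joins. -/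
inductive AnaWalk (G : DirHG V N r s) : V → Bool → V → Bool → List (Fin N) → Prop
  | single (e : Fin N) (u w : V) (bu bw : Bool)
      (hu : u ∈ G.side bu e) (hw : w ∈ G.side bw e) : AnaWalk G u bu w bw [e]
  | cons (e : Fin N) (u v w : V) (bu b bw : Bool) (L : List (Fin N))
      (hu : u ∈ G.side bu e) (hv : v ∈ G.side b e)
      (hL : AnaWalk G v b w bw L) : AnaWalk G u bu w bw (e :: L)

/-- `G` is anadiplosis connected: any two distinct vertices of `T(G) ∪ H(G)` are
joined by an anadiplosis walk, and every vertex of `T(G) ∩ H(G)` lies on an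
anadiplosis semi-cycle (a closed anadiplosis walk with at least two pairwise
distinct arcs, starting in a tail and ending in a head or vice versa). -/
def AnaConnected (G : DirHG V N r s) : Prop :=
  (∀ u v : V, u ≠ v →
      (∃ e, u ∈ G.tail e ∨ u ∈ G.head e) → (∃ e, v ∈ G.tail e ∨ v ∈ G.head e) →
      ∃ bu bv L, AnaWalk G u bu v bv L) ∧
  (∀ u : V, (∃ e, u ∈ G.tail e) → (∃ f, u ∈ G.head f) →
      ∃ L : List (Fin N), L.Nodup ∧ 2 ≤ L.length ∧
        (AnaWalk G u true u false L ∨ AnaWalk G u false u true L))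

/-- Membership of a vertex of the bipartite split (a tail-copy `Sum.inl u` or a
head-copy `Sum.inr v`) in an arc. -/
def splitMem (G : DirHG V N r s) : V ⊕ V → Fin N → Prop
  | Sum.inl u, e => u ∈ G.tail e
  | Sum.inr v, e => v ∈ G.head e

/-- Adjacency in the underlying hypergraph of the bipartite split `B(G)`:
two vertices are adjacent when some arc contains both. -/
def splitAdj (G : DirHG V N r s) (a b : V ⊕ V) : Prop :=
  ∃ e, G.splitMem a e ∧ G.splitMem b e

/-- Connectedness of the underlying hypergraph of the bipartite split `B(G)`:
any two of its vertices are joined by a walk. -/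
def SplitConnected (G : DirHG V N r s) : Prop :=
  ∀ a b, (∃ e, G.splitMem a e) → (∃ e, G.splitMem b e) →
    Relation.ReflTransGen G.splitAdj a b

end DirHG

/-! An anadiplosis walk is a walk in the underlying hypergraph of `B(G)` read through the copies
of its vertices: two consecutive arcs meet in a vertex on the same side of both, i.e. in a
common vertex of `B(G)`. So distinct vertices are joined by an anadiplosis walk iff some copies
of them are connected in `B(G)`, and a semi-cycle through `u` amounts to a walk in `B(G)` from
the tail-copy to the head-copy of `u`. Such a walk can be cut down to one with distinct arcs by
jumping ahead to a later occurrence of a repeated arc, and it has at least two arcs because the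
tail and the head of an arc are disjoint. -/

namespace DirHG

variable {V : Type} {N r s : ℕ} {G : DirHG V N r s}

def splitCopy (u : V) : Bool → V ⊕ V
  | true => Sum.inl u
  | false => Sum.inr u

theorem splitCopy_inj {u v : V} {b c : Bool} : splitCopy u b = splitCopy v c ↔ u = v ∧ b = c := by
  cases b <;> cases c <;> simp [splitCopy]

theorem exists_splitCopy_eq (a : V ⊕ V) : ∃ u b, splitCopy u b = a := by
  rcases a with u | u
  exacts [⟨u, true, rfl⟩, ⟨u, false, rfl⟩]

theorem splitMem_splitCopy {u : V} {b : Bool} {e : Fin N} :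
    G.splitMem (splitCopy u b) e ↔ u ∈ G.side b e := by
  cases b <;> rfl

theorem mem_tail_or_mem_head_iff {u : V} {e : Fin N} :
    u ∈ G.tail e ∨ u ∈ G.head e ↔ ∃ b, u ∈ G.side b e := by
  simp [side, or_comm]

instance : Std.Symm G.splitAdj where
  symm _ _ := fun ⟨e, ha, hb⟩ => ⟨e, hb, ha⟩

namespace AnaWalk

variable {u w : V} {b c : Bool} {L : List (Fin N)}

theorem ne_nil (h : AnaWalk G u b w c L) : L ≠ [] := by
  cases h <;> simp

theorem exists_start_mem (h : AnaWalk G u b w c L) : ∃ e, u ∈ G.side b e := by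
  cases h with
  | single e _ _ _ _ hu _ => exact ⟨e, hu⟩
  | cons e _ _ _ _ _ _ _ hu _ _ => exact ⟨e, hu⟩

theorem exists_end_mem (h : AnaWalk G u b w c L) : ∃ e, w ∈ G.side c e := by
  induction h with
  | single e _ _ _ _ _ hw => exact ⟨e, hw⟩
  | cons _ _ _ _ _ _ _ _ _ _ _ ih => exact ih

theorem reflTransGen (h : AnaWalk G u b w c L) :
    Relation.ReflTransGen G.splitAdj (splitCopy u b) (splitCopy w c) := by
  induction h with
  | single e _ _ _ _ hu hw =>
      exact .single ⟨e, splitMem_splitCopy.2 hu, splitMem_splitCopy.2 hw⟩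
  | cons e _ _ _ _ _ _ _ hu hv _ ih =>
      exact .head ⟨e, splitMem_splitCopy.2 hu, splitMem_splitCopy.2 hv⟩ ih

theorem exists_suffix_of_mem (h : AnaWalk G u b w c L) {e : Fin N} (he : e ∈ L) :
    ∃ L', e :: L' <:+ L ∧ ∀ v d, v ∈ G.side d e → AnaWalk G v d w c (e :: L') := by
  induction h with
  | single f _ _ _ _ _ hw =>
      obtain rfl := List.mem_singleton.1 he
      exact ⟨[], List.suffix_refl _, fun v d hv => .single e v _ d _ hv hw⟩
  | cons f _ x _ _ b' _ L' _ hx hL ih =>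
      rcases List.mem_cons.1 he with rfl | he'
      · exact ⟨L', List.suffix_refl _, fun v d hv => .cons e v x _ d b' _ L' hv hx hL⟩
      · obtain ⟨L'', hsuf, hwalk⟩ := ih he'
        exact ⟨L'', hsuf.trans (List.suffix_cons f L'), hwalk⟩

theorem exists_nodup (h : AnaWalk G u b w c L) : ∃ L', L'.Nodup ∧ AnaWalk G u b w c L' := by
  induction h with
  | single e u w b c hu hw => exact ⟨[e], List.nodup_singleton e, .single e u w b c hu hw⟩
  | cons e u v w b d c _ hu hv _ ih =>
      obtain ⟨L', hnd, hL'⟩ := ih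
      by_cases he : e ∈ L'
      · obtain ⟨L'', hsuf, hwalk⟩ := hL'.exists_suffix_of_mem he
        exact ⟨e :: L'', hsuf.sublist.nodup hnd, hwalk u b hu⟩
      · exact ⟨e :: L', List.nodup_cons.2 ⟨he, hnd⟩, .cons e u v w b d c L' hu hv hL'⟩

theorem two_le_length (h : AnaWalk G u true u false L) : 2 ≤ L.length := by
  cases h with
  | single e _ _ _ _ hu hw => exact absurd hw (Finset.disjoint_left.1 (G.disj e) hu)
  | cons _ _ _ _ _ _ _ L hu _ hL => exact Nat.succ_le_succ (List.length_pos_of_ne_nil hL.ne_nil)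

end AnaWalk

theorem exists_anaWalk_of_reflTransGen {u w : V} {b c : Bool}
    (h : Relation.ReflTransGen G.splitAdj (splitCopy u b) (splitCopy w c))
    (hne : splitCopy u b ≠ splitCopy w c) : ∃ L, AnaWalk G u b w c L := by
  generalize ha : splitCopy u b = a at h hne
  induction h using Relation.ReflTransGen.head_induction_on generalizing u b with
  | refl => exact absurd rfl hne
  | @head _ x hadj _ ih =>
      obtain ⟨e, hu, hx⟩ := hadj
      obtain ⟨v, d, rfl⟩ := exists_splitCopy_eq x
      subst ha
      rw [splitMem_splitCopy] at hu hx
      by_cases hv : splitCopy v d = splitCopy w c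
      · obtain ⟨rfl, rfl⟩ := splitCopy_inj.1 hv
        exact ⟨[e], .single e u v b d hu hx⟩
      · obtain ⟨L, hL⟩ := ih rfl hv
        exact ⟨e :: L, .cons e u v w b d c L hu hx hL⟩

theorem AnaConnected.reflTransGen_splitCopy_self (hG : G.AnaConnected) {u : V} {b c : Bool}
    {e f : Fin N} (he : u ∈ G.side b e) (hf : u ∈ G.side c f) :
    Relation.ReflTransGen G.splitAdj (splitCopy u b) (splitCopy u c) := by
  have tail_head : ∀ {e f}, u ∈ G.tail e → u ∈ G.head f →
      Relation.ReflTransGen G.splitAdj (Sum.inl u) (Sum.inr u) := fun he hf => by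
    obtain ⟨L, -, -, hL | hL⟩ := hG.2 u ⟨_, he⟩ ⟨_, hf⟩
    exacts [hL.reflTransGen, symm hL.reflTransGen]
  cases b <;> cases c
  exacts [.refl, symm (tail_head hf he), tail_head he hf, .refl]

theorem AnaConnected.splitConnected (hG : G.AnaConnected) : G.SplitConnected := by
  rintro a a' ⟨e, ha⟩ ⟨e', ha'⟩
  obtain ⟨u, b, rfl⟩ := exists_splitCopy_eq a
  obtain ⟨v, c, rfl⟩ := exists_splitCopy_eq a'
  rw [splitMem_splitCopy] at ha ha'
  by_cases huv : u = v
  · subst huv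
    exact hG.reflTransGen_splitCopy_self ha ha'
  obtain ⟨b', c', L, hL⟩ := hG.1 u v huv
    ⟨e, mem_tail_or_mem_head_iff.2 ⟨b, ha⟩⟩ ⟨e', mem_tail_or_mem_head_iff.2 ⟨c, ha'⟩⟩
  obtain ⟨f, hf⟩ := hL.exists_start_mem
  obtain ⟨f', hf'⟩ := hL.exists_end_mem
  exact (hG.reflTransGen_splitCopy_self ha hf).trans <|
    hL.reflTransGen.trans (hG.reflTransGen_splitCopy_self hf' ha')

theorem SplitConnected.anaConnected (hG : G.SplitConnected) : G.AnaConnected := by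
  refine ⟨fun u v huv ⟨e, hu⟩ ⟨e', hv⟩ => ?_, fun u ⟨e, hu⟩ ⟨f, hf⟩ => ?_⟩
  · obtain ⟨b, hu⟩ := mem_tail_or_mem_head_iff.1 hu
    obtain ⟨c, hv⟩ := mem_tail_or_mem_head_iff.1 hv
    obtain ⟨L, hL⟩ := exists_anaWalk_of_reflTransGen
      (hG _ _ ⟨e, splitMem_splitCopy.2 hu⟩ ⟨e', splitMem_splitCopy.2 hv⟩)
      (fun h => huv (splitCopy_inj.1 h).1)
    exact ⟨b, c, L, hL⟩
  · obtain ⟨L, hL⟩ := exists_anaWalk_of_reflTransGen (hG (Sum.inl u) (Sum.inr u) ⟨e, hu⟩ ⟨f, hf⟩)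
      (b := true) (c := false) (by simp [splitCopy])
    obtain ⟨L', hnd, hL'⟩ := hL.exists_nodup
    exact ⟨L', hnd, hL'.two_le_length, Or.inl hL'⟩

end DirHG

theorem anaConnected_iff_splitConnected_general (V : Type) (N r s : ℕ)
    (G : DirHG V N r s) : G.AnaConnected ↔ G.SplitConnected :=
  ⟨DirHG.AnaConnected.splitConnected, DirHG.SplitConnected.anaConnected⟩

/-- An `(r,s)`-directed hypergraph is anadiplosis connected if and only if the
underlying undirected hypergraph of its bipartite split is connected. -/
theorem anaConnected_iff_splitConnected (V : Type) (N r s : ℕ) (hr : 0 < r) (hs : 0 < s)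
    (G : DirHG V N r s) : G.AnaConnected ↔ G.SplitConnected :=
  anaConnected_iff_splitConnected_general V N r s G
end

section
/- Let G be an (r,s)-directed hypergraph with anadiplosis components G₁,...,G_k, and suppose r/p + s/q ≥ 1. Then λ_{p,q}(G) = max_{1≤i≤k} λ_{p,q}(G_i). -/
/-- An `(r,s)`-directed hypergraph with tail vertices `Fin m`, head vertices
`Fin n`, and arcs indexed by a type `E`. -/
structure DirHypergraph (m n : ℕ) (E : Type) (r s : ℕ) where
  tail : E → Finset (Fin m)
  head : E → Finset (Fin n)
  tail_card : ∀ e, (tail e).card = r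
  head_card : ∀ e, (head e).card = s

namespace DirHypergraph

noncomputable def pnorm {k : ℕ} (p : ℝ) (x : Fin k → ℝ) : ℝ :=
  (∑ i, |x i| ^ p) ^ (1 / p)

variable {m n r s : ℕ} {E : Type} [Fintype E]

noncomputable def polyForm (G : DirHypergraph m n E r s)
    (x : Fin m → ℝ) (y : Fin n → ℝ) : ℝ :=
  ∑ e, (∏ u ∈ G.tail e, x u) * ∏ v ∈ G.head e, y v

noncomputable def specRad (G : DirHypergraph m n E r s) (p q : ℝ) : ℝ :=
  sSup {z | ∃ x y, pnorm p x = 1 ∧ pnorm q y = 1 ∧ z = G.polyForm x y}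

/-- Membership of a vertex (tail copy `Sum.inl` / head copy `Sum.inr`) in an arc. -/
def memArc (G : DirHypergraph m n E r s) : (Fin m ⊕ Fin n) → E → Prop
  | Sum.inl u, e => u ∈ G.tail e
  | Sum.inr v, e => v ∈ G.head e

/-- Two vertices are adjacent when some arc contains both. -/
def adj (G : DirHypergraph m n E r s) (a b : Fin m ⊕ Fin n) : Prop :=
  ∃ e, G.memArc a e ∧ G.memArc b e

/-- Anadiplosis connectedness, expressed as connectedness of the underlying
hypergraph of the bipartite split. -/
def Connected (G : DirHypergraph m n E r s) : Prop :=
  ∀ a b, (∃ e, G.memArc a e) → (∃ e, G.memArc b e) →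
    Relation.ReflTransGen G.adj a b

/-- The subhypergraph formed by the arcs in class `i` of the partition `c`. -/
def restrict {N k : ℕ} (G : DirHypergraph m n (Fin N) r s)
    (c : Fin N → Fin k) (i : Fin k) :
    DirHypergraph m n {e : Fin N // c e = i} r s where
  tail e := G.tail e.1
  head e := G.head e.1
  tail_card e := G.tail_card e.1
  head_card e := G.head_card e.1

end DirHypergraph


/-!
The form is homogeneous of degree `(r, s)`, so `G.polyForm x y ≤ λ(G) ‖x‖_p ^ r ‖y‖_q ^ s`.
Distinct components have disjoint vertex sets, so a unit pair `(x, y)` splits into pieces of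
`p`- and `q`-masses `aᵢ`, `bᵢ` with `∑ aᵢ ≤ 1`, `∑ bᵢ ≤ 1`, and
`G.polyForm x y ≤ max λ(Gᵢ) · ∑ aᵢ^(r/p) bᵢ^(s/q)`. When `r/p + s/q ≥ 1`, weighted AM-GM
bounds the last sum by `1`. Conversely, restricting a unit pair to the vertices of one
component kills every other component (as `r + s > 0`), whence `λ(Gᵢ) ≤ λ(G)`.
-/

open Finset

lemma Real.add_mul_rpow_mul_rpow_le {a b α β : ℝ} (ha : 0 ≤ a) (ha1 : a ≤ 1) (hb : 0 ≤ b)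
    (hb1 : b ≤ 1) (hα : 0 ≤ α) (hβ : 0 ≤ β) (hαβ : 1 ≤ α + β) :
    (α + β) * (a ^ α * b ^ β) ≤ α * a + β * b := by
  have hs : 0 < α + β := by linarith
  have hθ : 0 ≤ α / (α + β) := div_nonneg hα hs.le
  have hφ : 0 ≤ β / (α + β) := div_nonneg hβ hs.le
  have hθα : α / (α + β) ≤ α := div_le_self hα hαβ
  have hφβ : β / (α + β) ≤ β := div_le_self hβ hαβ
  have hθφ : α / (α + β) + β / (α + β) = 1 := by rw [← add_div, div_self hs.ne']
  have key : a ^ α * b ^ β ≤ α / (α + β) * a + β / (α + β) * b :=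
    calc a ^ α * b ^ β ≤ a ^ (α / (α + β)) * b ^ (β / (α + β)) :=
          mul_le_mul (Real.rpow_le_rpow_of_exponent_ge' ha ha1 hθ hθα)
            (Real.rpow_le_rpow_of_exponent_ge' hb hb1 hφ hφβ)
            (Real.rpow_nonneg hb _) (Real.rpow_nonneg ha _)
      _ ≤ _ := Real.geom_mean_le_arith_mean2_weighted hθ hφ ha hb hθφ
  calc (α + β) * (a ^ α * b ^ β) ≤ (α + β) * (α / (α + β) * a + β / (α + β) * b) :=
        mul_le_mul_of_nonneg_left key hs.le
    _ = α * a + β * b := by field_simp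

lemma Real.sum_rpow_mul_rpow_le_one {ι : Type*} [Fintype ι] {a b : ι → ℝ} {α β : ℝ}
    (ha : ∀ i, 0 ≤ a i) (hb : ∀ i, 0 ≤ b i) (hsa : ∑ i, a i ≤ 1) (hsb : ∑ i, b i ≤ 1)
    (hα : 0 ≤ α) (hβ : 0 ≤ β) (hαβ : 1 ≤ α + β) :
    ∑ i, a i ^ α * b i ^ β ≤ 1 := by
  have ha1 : ∀ i, a i ≤ 1 := fun i =>
    (single_le_sum (fun j _ => ha j) (mem_univ i)).trans hsa
  have hb1 : ∀ i, b i ≤ 1 := fun i =>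
    (single_le_sum (fun j _ => hb j) (mem_univ i)).trans hsb
  have h : (α + β) * ∑ i, a i ^ α * b i ^ β ≤ (α + β) * 1 :=
    calc (α + β) * ∑ i, a i ^ α * b i ^ β ≤ ∑ i, (α * a i + β * b i) := by
          rw [mul_sum]
          exact sum_le_sum fun i _ =>
            Real.add_mul_rpow_mul_rpow_le (ha i) (ha1 i) (hb i) (hb1 i) hα hβ hαβ
      _ = α * ∑ i, a i + β * ∑ i, b i := by rw [sum_add_distrib, mul_sum, mul_sum]
      _ ≤ (α + β) * 1 := by nlinarith
  exact le_of_mul_le_mul_left h (by linarith)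

namespace DirHypergraph

section pnorm

variable {k : ℕ} {p : ℝ}

lemma pnorm_nonneg (p : ℝ) (x : Fin k → ℝ) : 0 ≤ pnorm p x := by
  unfold pnorm; positivity

lemma pnorm_eq_one_iff (hp : p ≠ 0) {x : Fin k → ℝ} : pnorm p x = 1 ↔ ∑ i, |x i| ^ p = 1 := by
  rw [pnorm, one_div, Real.rpow_inv_eq (by positivity) zero_le_one hp, Real.one_rpow]

lemma pnorm_pow_eq (x : Fin k → ℝ) (r : ℕ) :
    pnorm p x ^ r = (∑ i, |x i| ^ p) ^ ((r : ℝ) / p) := by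
  rw [pnorm, ← Real.rpow_natCast, ← Real.rpow_mul (by positivity),
    one_div_mul_eq_div]

lemma pnorm_smul (hp : 0 < p) (a : ℝ) (x : Fin k → ℝ) : pnorm p (a • x) = |a| * pnorm p x := by
  simp only [pnorm, Pi.smul_apply, smul_eq_mul, abs_mul,
    Real.mul_rpow (abs_nonneg a) (abs_nonneg _), ← mul_sum]
  rw [Real.mul_rpow (by positivity) (by positivity), ← Real.rpow_mul (abs_nonneg a),
    mul_one_div_cancel hp.ne', Real.rpow_one]

lemma eq_zero_of_pnorm_eq_zero (hp : 0 < p) {x : Fin k → ℝ} (h : pnorm p x = 0) : x = 0 := by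
  have hnonneg : ∀ i ∈ univ, 0 ≤ |x i| ^ p := fun _ _ => Real.rpow_nonneg (abs_nonneg _) _
  rw [pnorm, Real.rpow_eq_zero_iff_of_nonneg (sum_nonneg hnonneg),
    sum_eq_zero_iff_of_nonneg hnonneg] at h
  funext i
  simpa [Real.rpow_eq_zero (abs_nonneg _) hp.ne'] using h.1 i (mem_univ i)

lemma pnorm_le_pnorm (hp : 0 < p) {x y : Fin k → ℝ} (h : ∀ i, |x i| ≤ |y i|) :
    pnorm p x ≤ pnorm p y :=
  Real.rpow_le_rpow (by positivity)
    (sum_le_sum fun i _ => Real.rpow_le_rpow (abs_nonneg _) (h i) hp.le) (one_div_nonneg.2 hp.le)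

lemma pnorm_indicator_le (hp : 0 < p) (T : Set (Fin k)) (x : Fin k → ℝ) :
    pnorm p (T.indicator x) ≤ pnorm p x :=
  pnorm_le_pnorm hp fun i => by
    simpa only [Real.norm_eq_abs] using norm_indicator_le_norm_self (s := T) (f := x) (a := i)

lemma pnorm_single (hp : p ≠ 0) (i : Fin k) : pnorm p (Pi.single i 1) = 1 := by
  rw [pnorm_eq_one_iff hp, sum_eq_single i (fun j _ hj => by
    rw [Pi.single_eq_of_ne hj, abs_zero, Real.zero_rpow hp]) (fun h => absurd (mem_univ i) h)]
  simp

lemma exists_pnorm_eq_one_smul (hk : 0 < k) (hp : 0 < p) (x : Fin k → ℝ) :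
    ∃ x' : Fin k → ℝ, pnorm p x' = 1 ∧ x = pnorm p x • x' := by
  by_cases hx : pnorm p x = 0
  · refine ⟨Pi.single ⟨0, hk⟩ 1, pnorm_single hp.ne' _, ?_⟩
    rw [hx, zero_smul, eq_zero_of_pnorm_eq_zero hp hx]
  · refine ⟨(pnorm p x)⁻¹ • x, ?_, by rw [smul_smul, mul_inv_cancel₀ hx, one_smul]⟩
    rw [pnorm_smul hp, abs_inv, abs_of_nonneg (pnorm_nonneg p x), inv_mul_cancel₀ hx]

lemma abs_le_one_of_pnorm_eq_one (hp : 0 < p) {x : Fin k → ℝ} (h : pnorm p x = 1) (i : Fin k) :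
    |x i| ≤ 1 := by
  have hi : |x i| ^ p ≤ 1 := by
    rw [← (pnorm_eq_one_iff hp.ne').1 h]
    exact single_le_sum (fun j _ => Real.rpow_nonneg (abs_nonneg _) _) (mem_univ i)
  by_contra! hgt
  exact hi.not_gt (Real.one_lt_rpow hgt hp)

lemma sum_abs_indicator_rpow (hp : p ≠ 0) (T : Finset (Fin k)) (x : Fin k → ℝ) :
    ∑ i, |(T : Set (Fin k)).indicator x i| ^ p = ∑ i ∈ T, |x i| ^ p := by
  have h := Set.indicator_comp_of_zero (s := (T : Set (Fin k))) (f := x)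
    (g := fun t : ℝ => |t| ^ p) (by simp [Real.zero_rpow hp])
  simp only [← Function.comp_apply (f := fun t : ℝ => |t| ^ p), ← h]
  exact sum_indicator_subset _ (subset_univ T)

end pnorm

variable {m n r s : ℕ} {E : Type} [Fintype E] (G : DirHypergraph m n E r s) {p q : ℝ}

lemma polyForm_smul (a b : ℝ) (x : Fin m → ℝ) (y : Fin n → ℝ) :
    G.polyForm (a • x) (b • y) = a ^ r * b ^ s * G.polyForm x y := by
  simp only [polyForm, Pi.smul_apply, smul_eq_mul, prod_mul_distrib, prod_const, G.tail_card,
    G.head_card, mul_sum]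
  exact sum_congr rfl fun e _ => by ring

lemma polyForm_nonneg {x : Fin m → ℝ} {y : Fin n → ℝ} (hx : 0 ≤ x) (hy : 0 ≤ y) :
    0 ≤ G.polyForm x y :=
  sum_nonneg fun _ _ => mul_nonneg (prod_nonneg fun u _ => hx u) (prod_nonneg fun v _ => hy v)

lemma polyForm_le_card (hp : 0 < p) (hq : 0 < q) {x : Fin m → ℝ} {y : Fin n → ℝ}
    (hx : pnorm p x = 1) (hy : pnorm q y = 1) : G.polyForm x y ≤ Fintype.card E := by
  have hprod : ∀ {k} (t : Finset (Fin k)) (z : Fin k → ℝ), (∀ i, |z i| ≤ 1) →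
      |∏ i ∈ t, z i| ≤ 1 := fun t z hz => by
    rw [abs_prod]; exact prod_le_one (fun i _ => abs_nonneg _) fun i _ => hz i
  calc G.polyForm x y ≤ ∑ _e : E, (1 : ℝ) := sum_le_sum fun _ _ => by
        refine (le_abs_self _).trans ?_
        rw [abs_mul, ← one_mul 1]
        exact mul_le_mul (hprod _ _ (abs_le_one_of_pnorm_eq_one hp hx))
          (hprod _ _ (abs_le_one_of_pnorm_eq_one hq hy)) (abs_nonneg _) zero_le_one
    _ = Fintype.card E := by simp

lemma polyForm_le_specRad (hp : 0 < p) (hq : 0 < q) {x : Fin m → ℝ} {y : Fin n → ℝ}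
    (hx : pnorm p x = 1) (hy : pnorm q y = 1) : G.polyForm x y ≤ G.specRad p q := by
  refine le_csSup ⟨Fintype.card E, ?_⟩ ⟨x, y, hx, hy, rfl⟩
  rintro z ⟨x, y, hx, hy, rfl⟩
  exact G.polyForm_le_card hp hq hx hy

lemma specRad_le (hm : 0 < m) (hn : 0 < n) (hp : p ≠ 0) (hq : q ≠ 0) {M : ℝ}
    (h : ∀ x y, pnorm p x = 1 → pnorm q y = 1 → G.polyForm x y ≤ M) : G.specRad p q ≤ M := by
  refine csSup_le ⟨_, Pi.single ⟨0, hm⟩ 1, Pi.single ⟨0, hn⟩ 1,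
    pnorm_single hp _, pnorm_single hq _, rfl⟩ ?_
  rintro z ⟨x, y, hx, hy, rfl⟩
  exact h x y hx hy

lemma specRad_nonneg (hm : 0 < m) (hn : 0 < n) (hp : 0 < p) (hq : 0 < q) :
    0 ≤ G.specRad p q :=
  (G.polyForm_nonneg (Pi.single_nonneg.2 zero_le_one) (Pi.single_nonneg.2 zero_le_one)).trans
    (G.polyForm_le_specRad hp hq (pnorm_single hp.ne' ⟨0, hm⟩) (pnorm_single hq.ne' ⟨0, hn⟩))

lemma polyForm_le_specRad_mul_pnorm_pow (hm : 0 < m) (hn : 0 < n) (hp : 0 < p) (hq : 0 < q)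
    (x : Fin m → ℝ) (y : Fin n → ℝ) :
    G.polyForm x y ≤ G.specRad p q * pnorm p x ^ r * pnorm q y ^ s := by
  obtain ⟨x', hx', hxx⟩ := exists_pnorm_eq_one_smul hm hp x
  obtain ⟨y', hy', hyy⟩ := exists_pnorm_eq_one_smul hn hq y
  rw [show G.polyForm x y = G.polyForm (pnorm p x • x') (pnorm q y • y') by rw [← hxx, ← hyy],
    polyForm_smul]
  have hc : 0 ≤ pnorm p x ^ r * pnorm q y ^ s :=
    mul_nonneg (pow_nonneg (pnorm_nonneg p x) r) (pow_nonneg (pnorm_nonneg q y) s)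
  calc _ ≤ pnorm p x ^ r * pnorm q y ^ s * G.specRad p q :=
        mul_le_mul_of_nonneg_left (G.polyForm_le_specRad hp hq hx' hy') hc
    _ = _ := by ring

def tailVerts : Finset (Fin m) := univ.biUnion G.tail

def headVerts : Finset (Fin n) := univ.biUnion G.head

lemma polyForm_indicator_verts (x : Fin m → ℝ) (y : Fin n → ℝ) :
    G.polyForm ((G.tailVerts : Set (Fin m)).indicator x) ((G.headVerts : Set (Fin n)).indicator y)
      = G.polyForm x y := by
  refine sum_congr rfl fun e _ => congrArg₂ _ (prod_congr rfl fun u hu => ?_)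
    (prod_congr rfl fun v hv => ?_)
  · exact Set.indicator_of_mem (mem_biUnion.2 ⟨e, mem_univ e, hu⟩) x
  · exact Set.indicator_of_mem (mem_biUnion.2 ⟨e, mem_univ e, hv⟩) y

lemma polyForm_indicator_eq_zero (hrs : r ≠ 0 ∨ s ≠ 0) {T : Finset (Fin m)} {H : Finset (Fin n)}
    (hT : ∀ e, Disjoint (G.tail e) T) (hH : ∀ e, Disjoint (G.head e) H)
    (x : Fin m → ℝ) (y : Fin n → ℝ) :
    G.polyForm ((T : Set (Fin m)).indicator x) ((H : Set (Fin n)).indicator y) = 0 := by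
  refine sum_eq_zero fun e _ => ?_
  rcases hrs with hr | hs
  · obtain ⟨u, hu⟩ : (G.tail e).Nonempty :=
      card_pos.1 (by rw [G.tail_card]; exact Nat.pos_of_ne_zero hr)
    rw [prod_eq_zero hu (Set.indicator_of_notMem (disjoint_left.1 (hT e) hu) x), zero_mul]
  · obtain ⟨v, hv⟩ : (G.head e).Nonempty :=
      card_pos.1 (by rw [G.head_card]; exact Nat.pos_of_ne_zero hs)
    rw [prod_eq_zero hv (Set.indicator_of_notMem (disjoint_left.1 (hH e) hv) y), mul_zero]

lemma polyForm_le_specRad_mul_sum_verts (hm : 0 < m) (hn : 0 < n) (hp : 0 < p) (hq : 0 < q)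
    (x : Fin m → ℝ) (y : Fin n → ℝ) :
    G.polyForm x y ≤ G.specRad p q * (∑ u ∈ G.tailVerts, |x u| ^ p) ^ ((r : ℝ) / p)
      * (∑ v ∈ G.headVerts, |y v| ^ q) ^ ((s : ℝ) / q) := by
  rw [← G.polyForm_indicator_verts, ← sum_abs_indicator_rpow hp.ne',
    ← sum_abs_indicator_rpow hq.ne', ← pnorm_pow_eq, ← pnorm_pow_eq]
  exact G.polyForm_le_specRad_mul_pnorm_pow hm hn hp hq _ _

section restrict

variable {N k : ℕ} (G : DirHypergraph m n (Fin N) r s) (c : Fin N → Fin k)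

lemma polyForm_eq_sum_restrict (x : Fin m → ℝ) (y : Fin n → ℝ) :
    G.polyForm x y = ∑ i, (G.restrict c i).polyForm x y :=
  (Fintype.sum_fiberwise c _).symm

variable {G c} (hsep : ∀ e f, (∃ a, G.memArc a e ∧ G.memArc a f) → c e = c f)
include hsep

lemma disjoint_restrict_tail_tailVerts {i j : Fin k} (hij : i ≠ j) (e : {e // c e = j}) :
    Disjoint ((G.restrict c j).tail e) (G.restrict c i).tailVerts := by
  refine disjoint_left.2 fun u hu hu' => ?_
  obtain ⟨f, -, hf⟩ := mem_biUnion.1 hu'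
  exact hij (f.2 ▸ e.2 ▸ hsep f.1 e.1 ⟨Sum.inl u, hf, hu⟩)

lemma disjoint_restrict_head_headVerts {i j : Fin k} (hij : i ≠ j) (e : {e // c e = j}) :
    Disjoint ((G.restrict c j).head e) (G.restrict c i).headVerts := by
  refine disjoint_left.2 fun v hv hv' => ?_
  obtain ⟨f, -, hf⟩ := mem_biUnion.1 hv'
  exact hij (f.2 ▸ e.2 ▸ hsep f.1 e.1 ⟨Sum.inr v, hf, hv⟩)

lemma pairwiseDisjoint_restrict_tailVerts :
    ((univ : Finset (Fin k)) : Set (Fin k)).PairwiseDisjoint fun i => (G.restrict c i).tailVerts :=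
  fun _ _ _ _ hij => (disjoint_biUnion_left _ _ _).2 fun e _ =>
    disjoint_restrict_tail_tailVerts hsep hij.symm e

lemma pairwiseDisjoint_restrict_headVerts :
    ((univ : Finset (Fin k)) : Set (Fin k)).PairwiseDisjoint fun i => (G.restrict c i).headVerts :=
  fun _ _ _ _ hij => (disjoint_biUnion_left _ _ _).2 fun e _ =>
    disjoint_restrict_head_headVerts hsep hij.symm e

lemma polyForm_indicator_restrict_verts (hrs : r ≠ 0 ∨ s ≠ 0) (i : Fin k)
    (x : Fin m → ℝ) (y : Fin n → ℝ) :
    G.polyForm (((G.restrict c i).tailVerts : Set (Fin m)).indicator x)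
        (((G.restrict c i).headVerts : Set (Fin n)).indicator y) =
      (G.restrict c i).polyForm x y := by
  rw [polyForm_eq_sum_restrict G c, sum_eq_single i (fun j _ hji =>
      (G.restrict c j).polyForm_indicator_eq_zero hrs
        (disjoint_restrict_tail_tailVerts hsep hji.symm)
        (disjoint_restrict_head_headVerts hsep hji.symm) x y)
      (fun h => absurd (mem_univ i) h), polyForm_indicator_verts]

lemma specRad_restrict_le (hm : 0 < m) (hn : 0 < n) (hp : 0 < p) (hq : 0 < q)
    (hrs : r ≠ 0 ∨ s ≠ 0) (i : Fin k) : (G.restrict c i).specRad p q ≤ G.specRad p q := by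
  refine specRad_le _ hm hn hp.ne' hq.ne' fun x y hx hy => ?_
  have hx' := (pnorm_indicator_le hp (G.restrict c i).tailVerts x).trans hx.le
  have hy' := (pnorm_indicator_le hq (G.restrict c i).headVerts y).trans hy.le
  rw [← polyForm_indicator_restrict_verts hsep hrs]
  refine (G.polyForm_le_specRad_mul_pnorm_pow hm hn hp hq _ _).trans ?_
  rw [mul_assoc]
  refine mul_le_of_le_one_right (G.specRad_nonneg hm hn hp hq) ?_
  exact mul_le_one₀ (pow_le_one₀ (pnorm_nonneg _ _) hx') (pow_nonneg (pnorm_nonneg _ _) _)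
    (pow_le_one₀ (pnorm_nonneg _ _) hy')

lemma specRad_le_of_forall_restrict_le (hm : 0 < m) (hn : 0 < n) (hp : 0 < p) (hq : 0 < q)
    (he : 1 ≤ (r : ℝ) / p + (s : ℝ) / q) {M : ℝ} (hM : ∀ i, (G.restrict c i).specRad p q ≤ M)
    (hM0 : 0 ≤ M) : G.specRad p q ≤ M := by
  refine specRad_le _ hm hn hp.ne' hq.ne' fun x y hx hy => ?_
  set a := fun i => ∑ u ∈ (G.restrict c i).tailVerts, |x u| ^ p
  set b := fun i => ∑ v ∈ (G.restrict c i).headVerts, |y v| ^ q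
  have ha : ∀ i, 0 ≤ a i := fun _ => by positivity
  have hb : ∀ i, 0 ≤ b i := fun _ => by positivity
  have hsa : ∑ i, a i ≤ 1 := by
    rw [← sum_biUnion (pairwiseDisjoint_restrict_tailVerts hsep),
      ← (pnorm_eq_one_iff hp.ne').1 hx]
    exact sum_le_univ_sum_of_nonneg fun _ => Real.rpow_nonneg (abs_nonneg _) _
  have hsb : ∑ i, b i ≤ 1 := by
    rw [← sum_biUnion (pairwiseDisjoint_restrict_headVerts hsep),
      ← (pnorm_eq_one_iff hq.ne').1 hy]
    exact sum_le_univ_sum_of_nonneg fun _ => Real.rpow_nonneg (abs_nonneg _) _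
  have hα : 0 ≤ (r : ℝ) / p := by positivity
  have hβ : 0 ≤ (s : ℝ) / q := by positivity
  calc G.polyForm x y = ∑ i, (G.restrict c i).polyForm x y := polyForm_eq_sum_restrict G c x y
    _ ≤ ∑ i, M * (a i ^ ((r : ℝ) / p) * b i ^ ((s : ℝ) / q)) := sum_le_sum fun i _ => by
        refine ((G.restrict c i).polyForm_le_specRad_mul_sum_verts hm hn hp hq x y).trans ?_
        rw [mul_assoc]
        exact mul_le_mul_of_nonneg_right (hM i)
          (mul_nonneg (Real.rpow_nonneg (ha i) _) (Real.rpow_nonneg (hb i) _))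
    _ = M * ∑ i, a i ^ ((r : ℝ) / p) * b i ^ ((s : ℝ) / q) := (mul_sum _ _ _).symm
    _ ≤ M := mul_le_of_le_one_right hM0 (Real.sum_rpow_mul_rpow_le_one ha hb hsa hsb hα hβ he)

end restrict

end DirHypergraph

theorem specRad_eq_max_components_general (m n N k r s : ℕ) (hm : 0 < m) (hn : 0 < n)
    (hk : 0 < k) (G : DirHypergraph m n (Fin N) r s)
    (p q : ℝ) (hp : 1 ≤ p) (hq : 1 ≤ q)
    (he : 1 ≤ (r : ℝ) / p + (s : ℝ) / q)
    (c : Fin N → Fin k)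
    (hsep : ∀ e f, (∃ a, G.memArc a e ∧ G.memArc a f) → c e = c f) :
    G.specRad p q =
      Finset.univ.sup' ⟨(⟨0, hk⟩ : Fin k), Finset.mem_univ _⟩
        (fun i => (G.restrict c i).specRad p q) := by
  have hp0 : 0 < p := by linarith
  have hq0 : 0 < q := by linarith
  have hrs : r ≠ 0 ∨ s ≠ 0 := by
    by_contra! h
    norm_num [h.1, h.2] at he
  have hle_sup (i : Fin k) := le_sup' (fun j => (G.restrict c j).specRad p q) (mem_univ i)
  refine le_antisymm ?_ (sup'_le _ _ fun i _ =>
    DirHypergraph.specRad_restrict_le hsep hm hn hp0 hq0 hrs i)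
  exact DirHypergraph.specRad_le_of_forall_restrict_le hsep hm hn hp0 hq0 he hle_sup
    (((G.restrict c ⟨0, hk⟩).specRad_nonneg hm hn hp0 hq0).trans (hle_sup _))

/-- If `r/p + s/q ≥ 1`, the `(p,q)`-spectral radius of an `(r,s)`-directed
hypergraph equals the maximum of the `(p,q)`-spectral radii of its anadiplosis
components (given by a partition `c` of the arcs into vertex-disjoint,
anadiplosis connected pieces). -/
theorem specRad_eq_max_components (m n N k r s : ℕ) (hm : 0 < m) (hn : 0 < n)
    (hk : 0 < k) (G : DirHypergraph m n (Fin N) r s)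
    (p q : ℝ) (hp : 1 ≤ p) (hq : 1 ≤ q)
    (he : 1 ≤ (r : ℝ) / p + (s : ℝ) / q)
    (c : Fin N → Fin k)
    (hcover : ∀ i, ∃ e, c e = i)
    (hsep : ∀ e f, (∃ a, G.memArc a e ∧ G.memArc a f) → c e = c f)
    (hconn : ∀ i, (G.restrict c i).Connected) :
    G.specRad p q =
      Finset.univ.sup' ⟨(⟨0, hk⟩ : Fin k), Finset.mem_univ _⟩
        (fun i => (G.restrict c i).specRad p q) :=
  specRad_eq_max_components_general m n N k r s hm hn hk G p q hp hq he c hsep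
end

section
/- Let G be an (r,s)-directed hypergraph with r/p + s/q = 1. If G admits a parabolic α-subnormal weighted incidence matrix B (i.e., ∑_{e: u∈T(e)} B(u,e) ≤ 1 for all u ∈ T(G), ∑_{e: v∈H(e)} B(v,e) ≤ 1 for all v ∈ H(G), and ∏_{u∈T(e)} B(u,e)^{1/p} · ∏_{v∈H(e)} B(v,e)^{1/q} ≥ α for all arcs e), then λ_{p,q}(G) ≤ 1/(r^{r/p} s^{s/q} α). -/
private lemma amgm_aux {ι : Type*} (t : Finset ι) (f : ι → ℝ) (hf : ∀ i ∈ t, 0 ≤ f i)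
    {p : ℝ} (hp : 0 < p) :
    ∏ i ∈ t, f i ^ (1/p) ≤ ((1/(t.card : ℝ)) * ∑ i ∈ t, f i) ^ ((t.card : ℝ)/p) := by
  rcases t.eq_empty_or_nonempty with rfl | hne
  · simp
  · have hn : (0:ℝ) < t.card := by exact_mod_cast hne.card_pos
    have geo : ∏ i ∈ t, f i ^ (1/(t.card:ℝ)) ≤ (1/(t.card:ℝ)) * ∑ i ∈ t, f i := by
      have h := Real.geom_mean_le_arith_mean_weighted t (fun _ => 1/(t.card:ℝ)) f
        (fun i _ => by positivity)
        (by rw [Finset.sum_const, nsmul_eq_mul]; field_simp) hf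
      simpa [Finset.mul_sum] using h
    have heq : ∏ i ∈ t, f i ^ (1/p) = (∏ i ∈ t, f i ^ (1/(t.card:ℝ))) ^ ((t.card:ℝ)/p) := by
      rw [← Real.finset_prod_rpow t _ (fun i hi => Real.rpow_nonneg (hf i hi) _)]
      refine Finset.prod_congr rfl fun i hi => ?_
      rw [← Real.rpow_mul (hf i hi)]
      congr 1
      field_simp
    rw [heq]
    exact Real.rpow_le_rpow
      (Finset.prod_nonneg fun i hi => Real.rpow_nonneg (hf i hi) _) geo (by positivity)

private lemma holder2_aux {ι : Type*} [Fintype ι] (a b : ι → ℝ) (θ φ A B : ℝ)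
    (ha : ∀ i, 0 ≤ a i) (hb : ∀ i, 0 ≤ b i) (hθ : 0 ≤ θ) (hφ : 0 ≤ φ)
    (hsum : θ + φ = 1) (hA0 : 0 ≤ A) (hB0 : 0 ≤ B)
    (hA : ∑ i, a i ≤ A) (hB : ∑ i, b i ≤ B)
    (hAz : A = 0 → ∀ i, a i = 0) (hBz : B = 0 → ∀ i, b i = 0) :
    ∑ i, a i ^ θ * b i ^ φ ≤ A ^ θ * B ^ φ := by
  rcases hA0.eq_or_lt with hA' | hA'
  · -- A = 0
    have haz := hAz hA'.symm
    rcases eq_or_ne θ 0 with hθ0 | hθ0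
    · have hφ1 : φ = 1 := by linarith
      calc ∑ i, a i ^ θ * b i ^ φ = ∑ i, b i := by
            simp [hθ0, hφ1, Real.rpow_one]
        _ ≤ B := hB
        _ = A ^ θ * B ^ φ := by simp [hθ0, hφ1]
    · have : ∀ i, a i ^ θ * b i ^ φ = 0 := fun i => by
        rw [haz i, Real.zero_rpow hθ0, zero_mul]
      simp only [this, Finset.sum_const_zero]
      positivity
  rcases hB0.eq_or_lt with hB' | hB'
  · have hbz := hBz hB'.symm
    rcases eq_or_ne φ 0 with hφ0 | hφ0
    · have hθ1 : θ = 1 := by linarith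
      calc ∑ i, a i ^ θ * b i ^ φ = ∑ i, a i := by
            simp [hφ0, hθ1, Real.rpow_one]
        _ ≤ A := hA
        _ = A ^ θ * B ^ φ := by simp [hφ0, hθ1]
    · have : ∀ i, a i ^ θ * b i ^ φ = 0 := fun i => by
        rw [hbz i, Real.zero_rpow hφ0, mul_zero]
      simp only [this, Finset.sum_const_zero]
      positivity
  -- main case: 0 < A, 0 < B
  have hC : 0 < A ^ θ * B ^ φ :=
    mul_pos (Real.rpow_pos_of_pos hA' θ) (Real.rpow_pos_of_pos hB' φ)
  have key : ∀ i, a i ^ θ * b i ^ φ ≤ (θ * (a i / A) + φ * (b i / B)) * (A ^ θ * B ^ φ) := by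
    intro i
    have h1 := Real.geom_mean_le_arith_mean2_weighted hθ hφ
      (div_nonneg (ha i) hA0) (div_nonneg (hb i) hB0) hsum
    have h2 : (a i / A) ^ θ * (b i / B) ^ φ = (a i ^ θ * b i ^ φ) / (A ^ θ * B ^ φ) := by
      rw [Real.div_rpow (ha i) hA0, Real.div_rpow (hb i) hB0, div_mul_div_comm]
    rw [h2, div_le_iff₀ hC] at h1
    exact h1
  calc ∑ i, a i ^ θ * b i ^ φ
      ≤ ∑ i, (θ * (a i / A) + φ * (b i / B)) * (A ^ θ * B ^ φ) :=
        Finset.sum_le_sum fun i _ => key i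
    _ = (θ * ((∑ i, a i) / A) + φ * ((∑ i, b i) / B)) * (A ^ θ * B ^ φ) := by
        rw [← Finset.sum_mul]
        congr 1
        rw [Finset.sum_add_distrib, ← Finset.mul_sum, ← Finset.mul_sum,
          ← Finset.sum_div, ← Finset.sum_div]
    _ ≤ (θ * 1 + φ * 1) * (A ^ θ * B ^ φ) := by
        have h1 : (∑ i, a i) / A ≤ 1 := (div_le_one hA').mpr hA
        have h2 : (∑ i, b i) / B ≤ 1 := (div_le_one hB').mpr hB
        gcongr
    _ = A ^ θ * B ^ φ := by rw [mul_one, mul_one, hsum, one_mul]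

/-- Parabolic subnormal labeling bound: if `r/p + s/q = 1` and `G` admits a
parabolic `α`-subnormal weighted incidence matrix, then
`λ_{p,q}(G) ≤ 1/(r^{r/p} s^{s/q} α)`. -/

theorem specRad_le_of_parabolic_subnormal (m n N r s : ℕ)
    (G : DirectedHypergraph m n N r s) (p q α : ℝ) (hp : 1 ≤ p) (hq : 1 ≤ q)
    (hpar : (r : ℝ) / p + (s : ℝ) / q = 1) (hα : 0 < α)
    (Bt : Fin m → Fin N → ℝ) (Bh : Fin n → Fin N → ℝ)
    (hBt_pos : ∀ u e, u ∈ G.tail e → 0 < Bt u e)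
    (hBt_zero : ∀ u e, u ∉ G.tail e → Bt u e = 0)
    (hBh_pos : ∀ v e, v ∈ G.head e → 0 < Bh v e)
    (hBh_zero : ∀ v e, v ∉ G.head e → Bh v e = 0)
    (hrow_t : ∀ u, ∑ e, Bt u e ≤ 1)
    (hrow_h : ∀ v, ∑ e, Bh v e ≤ 1)
    (hprod : ∀ e, α ≤ (∏ u ∈ G.tail e, Bt u e ^ (1 / p)) *
        ∏ v ∈ G.head e, Bh v e ^ (1 / q)) :
    G.specRad p q ≤ 1 / ((r : ℝ) ^ ((r : ℝ) / p) * (s : ℝ) ^ ((s : ℝ) / q) * α) := by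
  have hp0 : (0:ℝ) < p := lt_of_lt_of_le one_pos hp
  have hq0 : (0:ℝ) < q := lt_of_lt_of_le one_pos hq
  set θ : ℝ := (r:ℝ)/p with hθdef
  set φ : ℝ := (s:ℝ)/q with hφdef
  have hθ : 0 ≤ θ := div_nonneg (Nat.cast_nonneg r) hp0.le
  have hφ : 0 ≤ φ := div_nonneg (Nat.cast_nonneg s) hq0.le
  have hCeq : (1:ℝ)/α * ((1/(r:ℝ)) ^ θ * (1/(s:ℝ)) ^ φ)
      = 1 / ((r : ℝ) ^ θ * (s : ℝ) ^ φ * α) := by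
    simp only [one_div, Real.inv_rpow (Nat.cast_nonneg r), Real.inv_rpow (Nat.cast_nonneg s),
      mul_inv]
    ring
  apply Real.sSup_le
  · rintro z ⟨x, y, hx, hy, rfl⟩
    -- normalize the p-norm conditions
    unfold DirectedHypergraph.pnorm at hx hy
    have hxs0 : (0:ℝ) ≤ ∑ u, |x u| ^ p :=
      Finset.sum_nonneg fun u _ => Real.rpow_nonneg (abs_nonneg _) _
    have hys0 : (0:ℝ) ≤ ∑ v, |y v| ^ q :=
      Finset.sum_nonneg fun v _ => Real.rpow_nonneg (abs_nonneg _) _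
    have hxs : ∑ u, |x u| ^ p = 1 := by
      have h1 : ((∑ u, |x u| ^ p) ^ (1/p)) ^ p = 1 ^ p := by rw [hx]
      rwa [one_div, Real.rpow_inv_rpow hxs0 hp0.ne', Real.one_rpow] at h1
    have hys : ∑ v, |y v| ^ q = 1 := by
      have h1 : ((∑ v, |y v| ^ q) ^ (1/q)) ^ q = 1 ^ q := by rw [hy]
      rwa [one_div, Real.rpow_inv_rpow hys0 hq0.ne', Real.one_rpow] at h1
    set TA : Fin N → ℝ := fun e => (1/(r:ℝ)) * ∑ u ∈ G.tail e, Bt u e * |x u| ^ p with hTA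
    set TB : Fin N → ℝ := fun e => (1/(s:ℝ)) * ∑ v ∈ G.head e, Bh v e * |y v| ^ q with hTB
    have hTA0 : ∀ e, 0 ≤ TA e := fun e => by
      rw [hTA]
      have : (0:ℝ) ≤ ∑ u ∈ G.tail e, Bt u e * |x u| ^ p :=
        Finset.sum_nonneg fun u hu =>
          mul_nonneg (hBt_pos u e hu).le (Real.rpow_nonneg (abs_nonneg _) _)
      positivity
    have hTB0 : ∀ e, 0 ≤ TB e := fun e => by
      rw [hTB]
      have : (0:ℝ) ≤ ∑ v ∈ G.head e, Bh v e * |y v| ^ q :=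
        Finset.sum_nonneg fun v hv =>
          mul_nonneg (hBh_pos v e hv).le (Real.rpow_nonneg (abs_nonneg _) _)
      positivity
    -- the per-edge bound
    have edge : ∀ e, (∏ u ∈ G.tail e, x u) * ∏ v ∈ G.head e, y v
        ≤ (1/α) * (TA e ^ θ * TB e ^ φ) := by
      intro e
      have habs : (∏ u ∈ G.tail e, x u) * ∏ v ∈ G.head e, y v
          ≤ (∏ u ∈ G.tail e, |x u|) * ∏ v ∈ G.head e, |y v| := by
        calc (∏ u ∈ G.tail e, x u) * ∏ v ∈ G.head e, y v
            ≤ |(∏ u ∈ G.tail e, x u) * ∏ v ∈ G.head e, y v| := le_abs_self _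
          _ = _ := by rw [abs_mul, Finset.abs_prod, Finset.abs_prod]
      have hsplit_t : ∏ u ∈ G.tail e, (Bt u e * |x u| ^ p) ^ (1/p)
          = (∏ u ∈ G.tail e, Bt u e ^ (1/p)) * ∏ u ∈ G.tail e, |x u| := by
        rw [← Finset.prod_mul_distrib]
        refine Finset.prod_congr rfl fun u hu => ?_
        rw [Real.mul_rpow (hBt_pos u e hu).le (Real.rpow_nonneg (abs_nonneg _) _), one_div,
          Real.rpow_rpow_inv (abs_nonneg _) hp0.ne']
      have hsplit_h : ∏ v ∈ G.head e, (Bh v e * |y v| ^ q) ^ (1/q)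
          = (∏ v ∈ G.head e, Bh v e ^ (1/q)) * ∏ v ∈ G.head e, |y v| := by
        rw [← Finset.prod_mul_distrib]
        refine Finset.prod_congr rfl fun v hv => ?_
        rw [Real.mul_rpow (hBh_pos v e hv).le (Real.rpow_nonneg (abs_nonneg _) _), one_div,
          Real.rpow_rpow_inv (abs_nonneg _) hq0.ne']
      have habsnn : (0:ℝ) ≤ (∏ u ∈ G.tail e, |x u|) * ∏ v ∈ G.head e, |y v| :=
        mul_nonneg (Finset.prod_nonneg fun u _ => abs_nonneg _)
          (Finset.prod_nonneg fun v _ => abs_nonneg _)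
      have hα' : α * ((∏ u ∈ G.tail e, |x u|) * ∏ v ∈ G.head e, |y v|)
          ≤ (∏ u ∈ G.tail e, (Bt u e * |x u| ^ p) ^ (1/p)) *
            ∏ v ∈ G.head e, (Bh v e * |y v| ^ q) ^ (1/q) := by
        rw [hsplit_t, hsplit_h]
        calc α * ((∏ u ∈ G.tail e, |x u|) * ∏ v ∈ G.head e, |y v|)
            ≤ ((∏ u ∈ G.tail e, Bt u e ^ (1/p)) * ∏ v ∈ G.head e, Bh v e ^ (1/q)) *
              ((∏ u ∈ G.tail e, |x u|) * ∏ v ∈ G.head e, |y v|) :=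
              mul_le_mul_of_nonneg_right (hprod e) habsnn
          _ = _ := by ring
      have hamgm_t : ∏ u ∈ G.tail e, (Bt u e * |x u| ^ p) ^ (1/p) ≤ TA e ^ θ := by
        have h := amgm_aux (G.tail e) (fun u => Bt u e * |x u| ^ p)
          (fun u hu => mul_nonneg (hBt_pos u e hu).le (Real.rpow_nonneg (abs_nonneg _) _)) hp0
        rw [G.tail_card e] at h
        rw [hTA]
        simpa using h
      have hamgm_h : ∏ v ∈ G.head e, (Bh v e * |y v| ^ q) ^ (1/q) ≤ TB e ^ φ := by
        have h := amgm_aux (G.head e) (fun v => Bh v e * |y v| ^ q)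
          (fun v hv => mul_nonneg (hBh_pos v e hv).le (Real.rpow_nonneg (abs_nonneg _) _)) hq0
        rw [G.head_card e] at h
        rw [hTB]
        simpa using h
      have hprodnn_t : (0:ℝ) ≤ ∏ u ∈ G.tail e, (Bt u e * |x u| ^ p) ^ (1/p) :=
        Finset.prod_nonneg fun u hu => Real.rpow_nonneg
          (mul_nonneg (hBt_pos u e hu).le (Real.rpow_nonneg (abs_nonneg _) _)) _
      calc (∏ u ∈ G.tail e, x u) * ∏ v ∈ G.head e, y v
          ≤ (∏ u ∈ G.tail e, |x u|) * ∏ v ∈ G.head e, |y v| := habs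
        _ = (1/α) * (α * ((∏ u ∈ G.tail e, |x u|) * ∏ v ∈ G.head e, |y v|)) := by
            rw [one_div, inv_mul_cancel_left₀ hα.ne']
        _ ≤ (1/α) * ((∏ u ∈ G.tail e, (Bt u e * |x u| ^ p) ^ (1/p)) *
              ∏ v ∈ G.head e, (Bh v e * |y v| ^ q) ^ (1/q)) :=
            mul_le_mul_of_nonneg_left hα' (by positivity)
        _ ≤ (1/α) * (TA e ^ θ * TB e ^ φ) :=
            mul_le_mul_of_nonneg_left
              (mul_le_mul hamgm_t hamgm_h
                (Finset.prod_nonneg fun v hv => Real.rpow_nonneg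
                  (mul_nonneg (hBh_pos v e hv).le (Real.rpow_nonneg (abs_nonneg _) _)) _)
                (le_trans hprodnn_t hamgm_t)) (by positivity)
    -- column-sum bounds
    have hsumTA : ∑ e, TA e ≤ 1/(r:ℝ) := by
      have hswap : ∑ e, ∑ u ∈ G.tail e, Bt u e * |x u| ^ p ≤ 1 := by
        have h1 : ∀ e : Fin N, ∑ u ∈ G.tail e, Bt u e * |x u| ^ p
            = ∑ u, Bt u e * |x u| ^ p := fun e => by
          refine Finset.sum_subset (Finset.subset_univ _) ?_
          intro u _ hu
          rw [hBt_zero u e hu, zero_mul]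
        calc ∑ e, ∑ u ∈ G.tail e, Bt u e * |x u| ^ p
            = ∑ e : Fin N, ∑ u, Bt u e * |x u| ^ p := by
              exact Finset.sum_congr rfl fun e _ => h1 e
          _ = ∑ u, ∑ e, Bt u e * |x u| ^ p := Finset.sum_comm
          _ = ∑ u, (∑ e, Bt u e) * |x u| ^ p := by
              exact Finset.sum_congr rfl fun u _ => (Finset.sum_mul _ _ _).symm
          _ ≤ ∑ u, 1 * |x u| ^ p := Finset.sum_le_sum fun u _ =>
              mul_le_mul_of_nonneg_right (hrow_t u) (Real.rpow_nonneg (abs_nonneg _) _)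
          _ = 1 := by simpa using hxs
      calc ∑ e, TA e = (1/(r:ℝ)) * ∑ e, ∑ u ∈ G.tail e, Bt u e * |x u| ^ p := by
            rw [hTA, ← Finset.mul_sum]
        _ ≤ (1/(r:ℝ)) * 1 := mul_le_mul_of_nonneg_left hswap (by positivity)
        _ = 1/(r:ℝ) := mul_one _
    have hsumTB : ∑ e, TB e ≤ 1/(s:ℝ) := by
      have hswap : ∑ e, ∑ v ∈ G.head e, Bh v e * |y v| ^ q ≤ 1 := by
        have h1 : ∀ e : Fin N, ∑ v ∈ G.head e, Bh v e * |y v| ^ q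
            = ∑ v, Bh v e * |y v| ^ q := fun e => by
          refine Finset.sum_subset (Finset.subset_univ _) ?_
          intro v _ hv
          rw [hBh_zero v e hv, zero_mul]
        calc ∑ e, ∑ v ∈ G.head e, Bh v e * |y v| ^ q
            = ∑ e : Fin N, ∑ v, Bh v e * |y v| ^ q := by
              exact Finset.sum_congr rfl fun e _ => h1 e
          _ = ∑ v, ∑ e, Bh v e * |y v| ^ q := Finset.sum_comm
          _ = ∑ v, (∑ e, Bh v e) * |y v| ^ q := by
              exact Finset.sum_congr rfl fun v _ => (Finset.sum_mul _ _ _).symm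
          _ ≤ ∑ v, 1 * |y v| ^ q := Finset.sum_le_sum fun v _ =>
              mul_le_mul_of_nonneg_right (hrow_h v) (Real.rpow_nonneg (abs_nonneg _) _)
          _ = 1 := by simpa using hys
      calc ∑ e, TB e = (1/(s:ℝ)) * ∑ e, ∑ v ∈ G.head e, Bh v e * |y v| ^ q := by
            rw [hTB, ← Finset.mul_sum]
        _ ≤ (1/(s:ℝ)) * 1 := mul_le_mul_of_nonneg_left hswap (by positivity)
        _ = 1/(s:ℝ) := mul_one _
    have hold := holder2_aux TA TB θ φ (1/(r:ℝ)) (1/(s:ℝ)) hTA0 hTB0 hθ hφ hpar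
      (by positivity) (by positivity) hsumTA hsumTB
      (fun h0 e => by rw [hTA]; simp only; rw [h0, zero_mul])
      (fun h0 e => by rw [hTB]; simp only; rw [h0, zero_mul])
    calc G.polyForm x y
        = ∑ e, (∏ u ∈ G.tail e, x u) * ∏ v ∈ G.head e, y v := rfl
      _ ≤ ∑ e, (1/α) * (TA e ^ θ * TB e ^ φ) := Finset.sum_le_sum fun e _ => edge e
      _ = (1/α) * ∑ e, TA e ^ θ * TB e ^ φ := by rw [← Finset.mul_sum]
      _ ≤ (1/α) * ((1/(r:ℝ)) ^ θ * (1/(s:ℝ)) ^ φ) :=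
          mul_le_mul_of_nonneg_left hold (by positivity)
      _ = 1 / ((r : ℝ) ^ θ * (s : ℝ) ^ φ * α) := hCeq
  · rw [← hCeq]
    have h1 : (0:ℝ) ≤ (1/(r:ℝ)) ^ θ := Real.rpow_nonneg (by positivity) _
    have h2 : (0:ℝ) ≤ (1/(s:ℝ)) ^ φ := Real.rpow_nonneg (by positivity) _
    positivity
end

section
/- Let G be an (r,s)-directed hypergraph with r/p + s/q < 1. If G admits an elliptic α-subnormal labeling, i.e., a weighted incidence matrix B and arc weights w(e) > 0 satisfying ∑_e w(e) ≤ 1, ∑_{e: u∈T(e)} B(u,e) ≤ 1 for all u ∈ T(G), ∑_{e: v∈H(e)} B(v,e) ≤ 1 for all v ∈ H(G), and w(e)^{1−(r/p+s/q)} ∏_{u∈T(e)} B(u,e)^{1/p} ∏_{v∈H(e)} B(v,e)^{1/q} ≥ α for all e, then λ_{p,q}(G) ≤ 1/(r^{r/p} s^{s/q} α). -/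
private lemma amgm_prod {ι : Type*} (F : Finset ι) (c : ι → ℝ)
    (hc : ∀ i ∈ F, 0 ≤ c i) :
    ∏ i ∈ F, c i ≤ ((∑ i ∈ F, c i) / F.card) ^ (F.card) := by
  rcases Finset.eq_empty_or_nonempty F with rfl | hne
  · simp
  · have hk : (0:ℝ) < F.card := by exact_mod_cast Finset.card_pos.mpr hne
    have h1 : ∏ i ∈ F, c i ^ ((F.card : ℝ)⁻¹) ≤ ∑ i ∈ F, (F.card : ℝ)⁻¹ * c i :=
      Real.geom_mean_le_arith_mean_weighted F _ c (fun i _ => by positivity)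
        (by rw [Finset.sum_const, nsmul_eq_mul]; field_simp) hc
    have h2 : ∑ i ∈ F, (F.card : ℝ)⁻¹ * c i = (∑ i ∈ F, c i) / F.card := by
      rw [← Finset.mul_sum]; ring
    have h3 : (∏ i ∈ F, c i ^ ((F.card : ℝ)⁻¹)) ^ (F.card) = ∏ i ∈ F, c i := by
      rw [Real.finset_prod_rpow F c hc,
        ← Real.rpow_natCast ((∏ i ∈ F, c i) ^ ((F.card : ℝ)⁻¹)) F.card,
        ← Real.rpow_mul (Finset.prod_nonneg hc), inv_mul_cancel₀ (ne_of_gt hk), Real.rpow_one]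
    calc ∏ i ∈ F, c i = (∏ i ∈ F, c i ^ ((F.card : ℝ)⁻¹)) ^ (F.card) := h3.symm
      _ ≤ (∑ i ∈ F, (F.card : ℝ)⁻¹ * c i) ^ (F.card) :=
          pow_le_pow_left₀ (Finset.prod_nonneg fun i hi => Real.rpow_nonneg (hc i hi) _) h1 _
      _ = ((∑ i ∈ F, c i) / F.card) ^ (F.card) := by rw [h2]

private lemma holder2 {ι : Type*} (F : Finset ι) (f g : ι → ℝ)
    (hf : ∀ i ∈ F, 0 ≤ f i) (hg : ∀ i ∈ F, 0 ≤ g i)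
    {a b : ℝ} (ha : 0 ≤ a) (hb : 0 ≤ b) (hab : a + b = 1) :
    ∑ i ∈ F, f i ^ a * g i ^ b ≤ (∑ i ∈ F, f i) ^ a * (∑ i ∈ F, g i) ^ b := by
  rcases eq_or_lt_of_le ha with ha0 | ha'
  · have hb1 : b = 1 := by linarith
    simp [← ha0, hb1]
  rcases eq_or_lt_of_le hb with hb0 | hb'
  · have ha1 : a = 1 := by linarith
    simp [← hb0, ha1]
  by_cases hF : (∑ i ∈ F, f i) = 0
  · have hz : ∀ i ∈ F, f i = 0 := (Finset.sum_eq_zero_iff_of_nonneg hf).1 hF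
    have hL : ∑ i ∈ F, f i ^ a * g i ^ b = 0 :=
      Finset.sum_eq_zero fun i hi => by rw [hz i hi, Real.zero_rpow (ne_of_gt ha'), zero_mul]
    rw [hL, hF, Real.zero_rpow (ne_of_gt ha'), zero_mul]
  by_cases hG : (∑ i ∈ F, g i) = 0
  · have hz : ∀ i ∈ F, g i = 0 := (Finset.sum_eq_zero_iff_of_nonneg hg).1 hG
    have hL : ∑ i ∈ F, f i ^ a * g i ^ b = 0 :=
      Finset.sum_eq_zero fun i hi => by rw [hz i hi, Real.zero_rpow (ne_of_gt hb'), mul_zero]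
    rw [hL, hG, Real.zero_rpow (ne_of_gt hb'), mul_zero]
  have hF' : 0 < ∑ i ∈ F, f i := lt_of_le_of_ne (Finset.sum_nonneg hf) (Ne.symm hF)
  have hG' : 0 < ∑ i ∈ F, g i := lt_of_le_of_ne (Finset.sum_nonneg hg) (Ne.symm hG)
  have hR : 0 < (∑ i ∈ F, f i) ^ a * (∑ i ∈ F, g i) ^ b :=
    mul_pos (Real.rpow_pos_of_pos hF' _) (Real.rpow_pos_of_pos hG' _)
  have key : ∀ i ∈ F, f i ^ a * g i ^ b ≤
      (a * (f i / (∑ i ∈ F, f i)) + b * (g i / (∑ i ∈ F, g i))) *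
        ((∑ i ∈ F, f i) ^ a * (∑ i ∈ F, g i) ^ b) := by
    intro i hi
    have h1 := Real.geom_mean_le_arith_mean2_weighted ha hb
      (div_nonneg (hf i hi) hF'.le) (div_nonneg (hg i hi) hG'.le) hab
    have h2 : (f i / (∑ i ∈ F, f i)) ^ a * (g i / (∑ i ∈ F, g i)) ^ b =
        (f i ^ a * g i ^ b) / ((∑ i ∈ F, f i) ^ a * (∑ i ∈ F, g i) ^ b) := by
      rw [Real.div_rpow (hf i hi) hF'.le, Real.div_rpow (hg i hi) hG'.le]; ring
    rw [h2, div_le_iff₀ hR] at h1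
    exact h1
  calc ∑ i ∈ F, f i ^ a * g i ^ b
      ≤ ∑ i ∈ F, (a * (f i / (∑ i ∈ F, f i)) + b * (g i / (∑ i ∈ F, g i))) *
          ((∑ i ∈ F, f i) ^ a * (∑ i ∈ F, g i) ^ b) := Finset.sum_le_sum key
    _ = (∑ i ∈ F, (a * (f i / (∑ i ∈ F, f i)) + b * (g i / (∑ i ∈ F, g i)))) *
          ((∑ i ∈ F, f i) ^ a * (∑ i ∈ F, g i) ^ b) := (Finset.sum_mul _ _ _).symm
    _ = (∑ i ∈ F, f i) ^ a * (∑ i ∈ F, g i) ^ b := by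
        have : ∑ i ∈ F, (a * (f i / (∑ i ∈ F, f i)) + b * (g i / (∑ i ∈ F, g i))) = 1 := by
          rw [Finset.sum_add_distrib]
          simp only [div_eq_mul_inv, ← Finset.mul_sum, ← Finset.sum_mul]
          rw [mul_inv_cancel₀ hF, mul_inv_cancel₀ hG, mul_one, mul_one, hab]
        rw [this, one_mul]

private lemma holder3 {ι : Type*} (F : Finset ι) (f g h : ι → ℝ)
    (hf : ∀ i ∈ F, 0 ≤ f i) (hg : ∀ i ∈ F, 0 ≤ g i) (hh : ∀ i ∈ F, 0 ≤ h i)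
    {a b c : ℝ} (ha : 0 ≤ a) (hb : 0 ≤ b) (hc : 0 ≤ c) (habc : a + b + c = 1) :
    ∑ i ∈ F, f i ^ a * g i ^ b * h i ^ c ≤
      (∑ i ∈ F, f i) ^ a * (∑ i ∈ F, g i) ^ b * (∑ i ∈ F, h i) ^ c := by
  by_cases hd : b + c = 0
  · have hb0 : b = 0 := by linarith
    have hc0 : c = 0 := by linarith
    have ha1 : a = 1 := by linarith
    simp [hb0, hc0, ha1]
  · have hd' : 0 < b + c := lt_of_le_of_ne (by linarith) (Ne.symm hd)
    set u : ι → ℝ := fun i => g i ^ (b / (b + c)) * h i ^ (c / (b + c)) with hu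
    have hu_nonneg : ∀ i ∈ F, 0 ≤ u i := fun i hi =>
      mul_nonneg (Real.rpow_nonneg (hg i hi) _) (Real.rpow_nonneg (hh i hi) _)
    have step1 : ∀ i ∈ F, f i ^ a * g i ^ b * h i ^ c = f i ^ a * u i ^ (b + c) := by
      intro i hi
      have : u i ^ (b + c) = g i ^ b * h i ^ c := by
        rw [hu]
        rw [Real.mul_rpow (Real.rpow_nonneg (hg i hi) _) (Real.rpow_nonneg (hh i hi) _),
          ← Real.rpow_mul (hg i hi), ← Real.rpow_mul (hh i hi),
          div_mul_cancel₀ _ hd, div_mul_cancel₀ _ hd]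
      rw [this]; ring
    have step2 : ∑ i ∈ F, f i ^ a * u i ^ (b + c) ≤
        (∑ i ∈ F, f i) ^ a * (∑ i ∈ F, u i) ^ (b + c) :=
      holder2 F f u hf hu_nonneg ha hd'.le (by linarith)
    have step3 : ∑ i ∈ F, u i ≤
        (∑ i ∈ F, g i) ^ (b / (b + c)) * (∑ i ∈ F, h i) ^ (c / (b + c)) :=
      holder2 F g h hg hh (by positivity) (by positivity) (by field_simp)
    have step4 : (∑ i ∈ F, u i) ^ (b + c) ≤ (∑ i ∈ F, g i) ^ b * (∑ i ∈ F, h i) ^ c := by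
      have h1 : ((∑ i ∈ F, g i) ^ (b / (b + c)) * (∑ i ∈ F, h i) ^ (c / (b + c))) ^ (b + c) =
          (∑ i ∈ F, g i) ^ b * (∑ i ∈ F, h i) ^ c := by
        rw [Real.mul_rpow (Real.rpow_nonneg (Finset.sum_nonneg hg) _)
            (Real.rpow_nonneg (Finset.sum_nonneg hh) _),
          ← Real.rpow_mul (Finset.sum_nonneg hg), ← Real.rpow_mul (Finset.sum_nonneg hh),
          div_mul_cancel₀ _ hd, div_mul_cancel₀ _ hd]
      calc (∑ i ∈ F, u i) ^ (b + c)
          ≤ ((∑ i ∈ F, g i) ^ (b / (b + c)) * (∑ i ∈ F, h i) ^ (c / (b + c))) ^ (b + c) :=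
            Real.rpow_le_rpow (Finset.sum_nonneg hu_nonneg) step3 hd'.le
        _ = (∑ i ∈ F, g i) ^ b * (∑ i ∈ F, h i) ^ c := h1
    calc ∑ i ∈ F, f i ^ a * g i ^ b * h i ^ c
        = ∑ i ∈ F, f i ^ a * u i ^ (b + c) := Finset.sum_congr rfl step1
      _ ≤ (∑ i ∈ F, f i) ^ a * (∑ i ∈ F, u i) ^ (b + c) := step2
      _ ≤ (∑ i ∈ F, f i) ^ a * ((∑ i ∈ F, g i) ^ b * (∑ i ∈ F, h i) ^ c) :=
          mul_le_mul_of_nonneg_left step4 (Real.rpow_nonneg (Finset.sum_nonneg hf) _)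
      _ = (∑ i ∈ F, f i) ^ a * (∑ i ∈ F, g i) ^ b * (∑ i ∈ F, h i) ^ c := by ring

/-- Elliptic subnormal labeling bound: if `r/p + s/q < 1` and `G` admits an
elliptic `α`-subnormal labeling (weighted incidence matrix together with arc
weights `w`), then `λ_{p,q}(G) ≤ 1/(r^{r/p} s^{s/q} α)`. -/
theorem specRad_le_of_elliptic_subnormal (m n N r s : ℕ)
    (G : DirectedHypergraph m n N r s) (p q α : ℝ) (hp : 1 ≤ p) (hq : 1 ≤ q)
    (hell : (r : ℝ) / p + (s : ℝ) / q < 1) (hα : 0 < α)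
    (Bt : Fin m → Fin N → ℝ) (Bh : Fin n → Fin N → ℝ) (w : Fin N → ℝ)
    (hw_pos : ∀ e, 0 < w e) (hw_sum : ∑ e, w e ≤ 1)
    (hBt_pos : ∀ u e, u ∈ G.tail e → 0 < Bt u e)
    (hBt_zero : ∀ u e, u ∉ G.tail e → Bt u e = 0)
    (hBh_pos : ∀ v e, v ∈ G.head e → 0 < Bh v e)
    (hBh_zero : ∀ v e, v ∉ G.head e → Bh v e = 0)
    (hrow_t : ∀ u, ∑ e, Bt u e ≤ 1)
    (hrow_h : ∀ v, ∑ e, Bh v e ≤ 1)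
    (hprod : ∀ e, α ≤ w e ^ (1 - ((r : ℝ) / p + (s : ℝ) / q)) *
        ((∏ u ∈ G.tail e, Bt u e ^ (1 / p)) *
          ∏ v ∈ G.head e, Bh v e ^ (1 / q))) :
    G.specRad p q ≤ 1 / ((r : ℝ) ^ ((r : ℝ) / p) * (s : ℝ) ^ ((s : ℝ) / q) * α) := by
  have hp0 : (0:ℝ) < p := lt_of_lt_of_le one_pos hp
  have hq0 : (0:ℝ) < q := lt_of_lt_of_le one_pos hq
  set l2 : ℝ := (r : ℝ) / p with hl2def
  set l3 : ℝ := (s : ℝ) / q with hl3def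
  set l1 : ℝ := 1 - (l2 + l3) with hl1def
  have hl1 : 0 < l1 := by rw [hl1def]; linarith
  have hl2 : 0 ≤ l2 := div_nonneg (Nat.cast_nonneg r) hp0.le
  have hl3 : 0 ≤ l3 := div_nonneg (Nat.cast_nonneg s) hq0.le
  have hl123 : l1 + l2 + l3 = 1 := by rw [hl1def]; ring
  have hrp : (0:ℝ) < (r : ℝ) ^ l2 := by
    rcases Nat.eq_zero_or_pos r with hr | hr
    · subst hr
      simp [hl2def]
    · exact Real.rpow_pos_of_pos (by exact_mod_cast hr) _
  have hsq : (0:ℝ) < (s : ℝ) ^ l3 := by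
    rcases Nat.eq_zero_or_pos s with hs | hs
    · subst hs
      simp [hl3def]
    · exact Real.rpow_pos_of_pos (by exact_mod_cast hs) _
  have hCpos : (0:ℝ) < 1 / ((r : ℝ) ^ l2 * (s : ℝ) ^ l3 * α) := by positivity
  apply Real.sSup_le _ hCpos.le
  rintro z ⟨x, y, hx, hy, rfl⟩
  have habs_x : ∀ i, (0:ℝ) ≤ |x i| ^ p := fun i => Real.rpow_nonneg (abs_nonneg _) _
  have habs_y : ∀ i, (0:ℝ) ≤ |y i| ^ q := fun i => Real.rpow_nonneg (abs_nonneg _) _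
  have hxp : ∑ i, |x i| ^ p = 1 := by
    have hA0 : (0:ℝ) ≤ ∑ i, |x i| ^ p := Finset.sum_nonneg fun i _ => habs_x i
    have h1 : ((∑ i, |x i| ^ p) ^ (1/p)) ^ p = ∑ i, |x i| ^ p := by
      rw [← Real.rpow_mul hA0, one_div_mul_cancel (ne_of_gt hp0), Real.rpow_one]
    have hx' : (∑ i, |x i| ^ p) ^ (1/p) = 1 := hx
    rw [← h1, hx', Real.one_rpow]
  have hyq : ∑ i, |y i| ^ q = 1 := by
    have hA0 : (0:ℝ) ≤ ∑ i, |y i| ^ q := Finset.sum_nonneg fun i _ => habs_y i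
    have h1 : ((∑ i, |y i| ^ q) ^ (1/q)) ^ q = ∑ i, |y i| ^ q := by
      rw [← Real.rpow_mul hA0, one_div_mul_cancel (ne_of_gt hq0), Real.rpow_one]
    have hy' : (∑ i, |y i| ^ q) ^ (1/q) = 1 := hy
    rw [← h1, hy', Real.one_rpow]
  set S : Fin N → ℝ := fun e => ∑ u ∈ G.tail e, Bt u e * |x u| ^ p with hSdef
  set T : Fin N → ℝ := fun e => ∑ v ∈ G.head e, Bh v e * |y v| ^ q with hTdef
  have hS_nonneg : ∀ e, 0 ≤ S e := fun e =>
    Finset.sum_nonneg fun u hu => mul_nonneg (hBt_pos u e hu).le (habs_x u)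
  have hT_nonneg : ∀ e, 0 ≤ T e := fun e =>
    Finset.sum_nonneg fun v hv => mul_nonneg (hBh_pos v e hv).le (habs_y v)
  have claim_t : ∀ e, ∏ u ∈ G.tail e, (Bt u e ^ (1/p) * |x u|) ≤ (S e / (r:ℝ)) ^ l2 := by
    intro e
    have hc : ∀ u ∈ G.tail e, (0:ℝ) ≤ Bt u e * |x u| ^ p := fun u hu =>
      mul_nonneg (hBt_pos u e hu).le (habs_x u)
    have hnn : (0:ℝ) ≤ (∑ u ∈ G.tail e, Bt u e * |x u| ^ p) / (r:ℝ) :=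
      div_nonneg (Finset.sum_nonneg hc) (Nat.cast_nonneg r)
    have heq : ∀ u ∈ G.tail e, Bt u e ^ (1/p) * |x u| = (Bt u e * |x u| ^ p) ^ (1/p) := by
      intro u hu
      rw [Real.mul_rpow (hBt_pos u e hu).le (habs_x u), ← Real.rpow_mul (abs_nonneg (x u)),
        mul_one_div_cancel (ne_of_gt hp0), Real.rpow_one]
    calc ∏ u ∈ G.tail e, (Bt u e ^ (1/p) * |x u|)
        = ∏ u ∈ G.tail e, (Bt u e * |x u| ^ p) ^ (1/p) := Finset.prod_congr rfl heq
      _ = (∏ u ∈ G.tail e, (Bt u e * |x u| ^ p)) ^ (1/p) := Real.finset_prod_rpow _ _ hc _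
      _ ≤ (((∑ u ∈ G.tail e, Bt u e * |x u| ^ p) / ((G.tail e).card : ℝ))
            ^ ((G.tail e).card)) ^ (1/p) :=
          Real.rpow_le_rpow (Finset.prod_nonneg hc) (amgm_prod _ _ hc) (by positivity)
      _ = (S e / (r:ℝ)) ^ l2 := by
          simp only [hSdef, hl2def, G.tail_card e]
          rw [← Real.rpow_natCast ((∑ u ∈ G.tail e, Bt u e * |x u| ^ p) / (r:ℝ)) r,
            ← Real.rpow_mul hnn, mul_one_div]
  have claim_h : ∀ e, ∏ v ∈ G.head e, (Bh v e ^ (1/q) * |y v|) ≤ (T e / (s:ℝ)) ^ l3 := by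
    intro e
    have hc : ∀ v ∈ G.head e, (0:ℝ) ≤ Bh v e * |y v| ^ q := fun v hv =>
      mul_nonneg (hBh_pos v e hv).le (habs_y v)
    have hnn : (0:ℝ) ≤ (∑ v ∈ G.head e, Bh v e * |y v| ^ q) / (s:ℝ) :=
      div_nonneg (Finset.sum_nonneg hc) (Nat.cast_nonneg s)
    have heq : ∀ v ∈ G.head e, Bh v e ^ (1/q) * |y v| = (Bh v e * |y v| ^ q) ^ (1/q) := by
      intro v hv
      rw [Real.mul_rpow (hBh_pos v e hv).le (habs_y v), ← Real.rpow_mul (abs_nonneg (y v)),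
        mul_one_div_cancel (ne_of_gt hq0), Real.rpow_one]
    calc ∏ v ∈ G.head e, (Bh v e ^ (1/q) * |y v|)
        = ∏ v ∈ G.head e, (Bh v e * |y v| ^ q) ^ (1/q) := Finset.prod_congr rfl heq
      _ = (∏ v ∈ G.head e, (Bh v e * |y v| ^ q)) ^ (1/q) := Real.finset_prod_rpow _ _ hc _
      _ ≤ (((∑ v ∈ G.head e, Bh v e * |y v| ^ q) / ((G.head e).card : ℝ))
            ^ ((G.head e).card)) ^ (1/q) :=
          Real.rpow_le_rpow (Finset.prod_nonneg hc) (amgm_prod _ _ hc) (by positivity)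
      _ = (T e / (s:ℝ)) ^ l3 := by
          simp only [hTdef, hl3def, G.head_card e]
          rw [← Real.rpow_natCast ((∑ v ∈ G.head e, Bh v e * |y v| ^ q) / (s:ℝ)) s,
            ← Real.rpow_mul hnn, mul_one_div]
  have key : ∀ e, α * ((∏ u ∈ G.tail e, |x u|) * ∏ v ∈ G.head e, |y v|) ≤
      w e ^ l1 * (S e / (r:ℝ)) ^ l2 * (T e / (s:ℝ)) ^ l3 := by
    intro e
    have hT1 : (0:ℝ) ≤ ∏ u ∈ G.tail e, |x u| := Finset.prod_nonneg fun _ _ => abs_nonneg _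
    have hT2 : (0:ℝ) ≤ ∏ v ∈ G.head e, |y v| := Finset.prod_nonneg fun _ _ => abs_nonneg _
    have h0 := mul_le_mul_of_nonneg_right (hprod e) (mul_nonneg hT1 hT2)
    have e1 : (∏ u ∈ G.tail e, Bt u e ^ (1/p)) * ∏ u ∈ G.tail e, |x u| =
        ∏ u ∈ G.tail e, (Bt u e ^ (1/p) * |x u|) := Finset.prod_mul_distrib.symm
    have e2 : (∏ v ∈ G.head e, Bh v e ^ (1/q)) * ∏ v ∈ G.head e, |y v| =
        ∏ v ∈ G.head e, (Bh v e ^ (1/q) * |y v|) := Finset.prod_mul_distrib.symm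
    have hw1 : (0:ℝ) ≤ w e ^ l1 := Real.rpow_nonneg (hw_pos e).le _
    have hP2 : (0:ℝ) ≤ ∏ v ∈ G.head e, (Bh v e ^ (1/q) * |y v|) :=
      Finset.prod_nonneg fun v hv =>
        mul_nonneg (Real.rpow_nonneg (hBh_pos v e hv).le _) (abs_nonneg _)
    have hA : (0:ℝ) ≤ (S e / (r:ℝ)) ^ l2 :=
      Real.rpow_nonneg (div_nonneg (hS_nonneg e) (Nat.cast_nonneg r)) _
    calc α * ((∏ u ∈ G.tail e, |x u|) * ∏ v ∈ G.head e, |y v|)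
        ≤ (w e ^ l1 * ((∏ u ∈ G.tail e, Bt u e ^ (1/p)) * ∏ v ∈ G.head e, Bh v e ^ (1/q))) *
            ((∏ u ∈ G.tail e, |x u|) * ∏ v ∈ G.head e, |y v|) := h0
      _ = w e ^ l1 * ((∏ u ∈ G.tail e, (Bt u e ^ (1/p) * |x u|)) *
            (∏ v ∈ G.head e, (Bh v e ^ (1/q) * |y v|))) := by rw [← e1, ← e2]; ring
      _ ≤ w e ^ l1 * ((S e / (r:ℝ)) ^ l2 * (T e / (s:ℝ)) ^ l3) :=
          mul_le_mul_of_nonneg_left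
            (mul_le_mul (claim_t e) (claim_h e) hP2 hA) hw1
      _ = w e ^ l1 * (S e / (r:ℝ)) ^ l2 * (T e / (s:ℝ)) ^ l3 := by ring
  have hSsum : ∑ e, S e ≤ 1 := by
    have h1 : ∀ e : Fin N, S e = ∑ u, Bt u e * |x u| ^ p := fun e =>
      Finset.sum_subset (Finset.subset_univ _)
        (fun u _ hu => by rw [hBt_zero u e hu, zero_mul])
    calc ∑ e, S e = ∑ e, ∑ u, Bt u e * |x u| ^ p := Finset.sum_congr rfl fun e _ => h1 e
      _ = ∑ u, ∑ e, Bt u e * |x u| ^ p := Finset.sum_comm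
      _ = ∑ u, (∑ e, Bt u e) * |x u| ^ p :=
          Finset.sum_congr rfl fun u _ => (Finset.sum_mul _ _ _).symm
      _ ≤ ∑ u, 1 * |x u| ^ p := Finset.sum_le_sum fun u _ =>
          mul_le_mul_of_nonneg_right (hrow_t u) (habs_x u)
      _ = 1 := by simpa using hxp
  have hTsum : ∑ e, T e ≤ 1 := by
    have h1 : ∀ e : Fin N, T e = ∑ v, Bh v e * |y v| ^ q := fun e =>
      Finset.sum_subset (Finset.subset_univ _)
        (fun v _ hv => by rw [hBh_zero v e hv, zero_mul])
    calc ∑ e, T e = ∑ e, ∑ v, Bh v e * |y v| ^ q := Finset.sum_congr rfl fun e _ => h1 e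
      _ = ∑ v, ∑ e, Bh v e * |y v| ^ q := Finset.sum_comm
      _ = ∑ v, (∑ e, Bh v e) * |y v| ^ q :=
          Finset.sum_congr rfl fun v _ => (Finset.sum_mul _ _ _).symm
      _ ≤ ∑ v, 1 * |y v| ^ q := Finset.sum_le_sum fun v _ =>
          mul_le_mul_of_nonneg_right (hrow_h v) (habs_y v)
      _ = 1 := by simpa using hyq
  have hhold := holder3 Finset.univ w (fun e => S e / (r:ℝ)) (fun e => T e / (s:ℝ))
    (fun e _ => (hw_pos e).le)
    (fun e _ => div_nonneg (hS_nonneg e) (Nat.cast_nonneg r))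
    (fun e _ => div_nonneg (hT_nonneg e) (Nat.cast_nonneg s))
    hl1.le hl2 hl3 hl123
  have hb1 : (∑ e, w e) ^ l1 ≤ 1 :=
    Real.rpow_le_one (Finset.sum_nonneg fun e _ => (hw_pos e).le) hw_sum hl1.le
  have hb2 : (∑ e, S e / (r:ℝ)) ^ l2 ≤ ((1:ℝ) / (r:ℝ)) ^ l2 := by
    rcases Nat.eq_zero_or_pos r with hr | hr
    · subst hr
      simp [hl2def]
    · have hr' : (0:ℝ) < (r:ℝ) := by exact_mod_cast hr
      have hrw : (∑ e, S e / (r:ℝ)) = (∑ e, S e) / (r:ℝ) := (Finset.sum_div _ _ _).symm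
      rw [hrw]
      exact Real.rpow_le_rpow
        (div_nonneg (Finset.sum_nonneg fun e _ => hS_nonneg e) hr'.le)
        (by gcongr) hl2
  have hb3 : (∑ e, T e / (s:ℝ)) ^ l3 ≤ ((1:ℝ) / (s:ℝ)) ^ l3 := by
    rcases Nat.eq_zero_or_pos s with hs | hs
    · subst hs
      simp [hl3def]
    · have hs' : (0:ℝ) < (s:ℝ) := by exact_mod_cast hs
      have hrw : (∑ e, T e / (s:ℝ)) = (∑ e, T e) / (s:ℝ) := (Finset.sum_div _ _ _).symm
      rw [hrw]
      exact Real.rpow_le_rpow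
        (div_nonneg (Finset.sum_nonneg fun e _ => hT_nonneg e) hs'.le)
        (by gcongr) hl3
  have hnn2 : (0:ℝ) ≤ (∑ e, S e / (r:ℝ)) ^ l2 :=
    Real.rpow_nonneg (Finset.sum_nonneg fun e _ => div_nonneg (hS_nonneg e) (Nat.cast_nonneg r)) _
  have hnn3 : (0:ℝ) ≤ (∑ e, T e / (s:ℝ)) ^ l3 :=
    Real.rpow_nonneg (Finset.sum_nonneg fun e _ => div_nonneg (hT_nonneg e) (Nat.cast_nonneg s)) _
  have hnnb : (0:ℝ) ≤ ((1:ℝ) / (r:ℝ)) ^ l2 :=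
    Real.rpow_nonneg (by positivity) _
  have hchain : α * G.polyForm x y ≤ ((1:ℝ)/(r:ℝ)) ^ l2 * ((1:ℝ)/(s:ℝ)) ^ l3 := by
    have habs : G.polyForm x y ≤ ∑ e, (∏ u ∈ G.tail e, |x u|) * ∏ v ∈ G.head e, |y v| := by
      apply Finset.sum_le_sum
      intro e _
      calc (∏ u ∈ G.tail e, x u) * ∏ v ∈ G.head e, y v
          ≤ |(∏ u ∈ G.tail e, x u) * ∏ v ∈ G.head e, y v| := le_abs_self _
        _ = (∏ u ∈ G.tail e, |x u|) * ∏ v ∈ G.head e, |y v| := by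
            rw [abs_mul, Finset.abs_prod, Finset.abs_prod]
    calc α * G.polyForm x y
        ≤ α * ∑ e, (∏ u ∈ G.tail e, |x u|) * ∏ v ∈ G.head e, |y v| :=
          mul_le_mul_of_nonneg_left habs hα.le
      _ = ∑ e, α * ((∏ u ∈ G.tail e, |x u|) * ∏ v ∈ G.head e, |y v|) :=
          Finset.mul_sum _ _ _
      _ ≤ ∑ e, w e ^ l1 * (S e / (r:ℝ)) ^ l2 * (T e / (s:ℝ)) ^ l3 :=
          Finset.sum_le_sum fun e _ => key e
      _ ≤ (∑ e, w e) ^ l1 * (∑ e, S e / (r:ℝ)) ^ l2 * (∑ e, T e / (s:ℝ)) ^ l3 := hhold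
      _ ≤ 1 * ((1:ℝ)/(r:ℝ)) ^ l2 * ((1:ℝ)/(s:ℝ)) ^ l3 := by
          apply mul_le_mul (mul_le_mul hb1 hb2 hnn2 zero_le_one) hb3 hnn3
          exact mul_nonneg zero_le_one hnnb
      _ = ((1:ℝ)/(r:ℝ)) ^ l2 * ((1:ℝ)/(s:ℝ)) ^ l3 := by rw [one_mul]
  rw [le_div_iff₀ (by positivity : (0:ℝ) < (r:ℝ) ^ l2 * (s:ℝ) ^ l3 * α)]
  have h2 := mul_le_mul_of_nonneg_right hchain (mul_pos hrp hsq).le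
  have h3 : ((1:ℝ)/(r:ℝ)) ^ l2 * ((1:ℝ)/(s:ℝ)) ^ l3 * ((r:ℝ) ^ l2 * (s:ℝ) ^ l3) = 1 := by
    rw [Real.div_rpow zero_le_one (Nat.cast_nonneg r),
      Real.div_rpow zero_le_one (Nat.cast_nonneg s), Real.one_rpow, Real.one_rpow]
    field_simp
  rw [h3] at h2
  calc G.polyForm x y * ((r:ℝ) ^ l2 * (s:ℝ) ^ l3 * α)
      = α * G.polyForm x y * ((r:ℝ) ^ l2 * (s:ℝ) ^ l3) := by ring
    _ ≤ 1 := h2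
end

section
/- Let G be an out-hyperstar with k arcs, i.e., an (r,s)-directed hypergraph in which every two arcs share exactly one common vertex (the center) lying in the tail of each arc, and otherwise all arcs are vertex-disjoint. If r/p + s/q < 1, then λ_{p,q}(G) = k^{1−((r−1)/p+s/q)} / (r^{r/p} s^{s/q}). If r/p + s/q = 1, then λ_{p,q}(G) = k^{1/p} / (r^{r/p} s^{s/q}). -/
/-!
Let `d⁺(u)` and `d⁻(v)` be the out- and in-degrees and put `x*_u = (d⁺(u) / (N r))^{1/p}`,
`y*_v = (d⁻(v) / (N s))^{1/q}`. These are unit vectors, and on an out-hyperstar every arc takes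
the same value `C` at `(x*, y*)`, so `λ_{p,q} ≥ N C`. Conversely, for unit `x, y` each arc term is
`C` times the product of the ratios `|x_u| / x*_u`, `|y_v| / y*_v`; weighted AM-GM with weights
`1/p`, `1/q` and the remaining weight `1 - r/p - s/q` on the constant `1` bounds it linearly in
`|x_u|^p / x*_u^p` and `|y_v|^q / y*_v^q`. Summing over the arcs, vertex `u` is counted `d⁺(u)`
times, which cancels the `d⁺(u)` in `x*_u`, and the sum is at most `N C`.
-/

open Finset

namespace Real

theorem prod_rpow_le_sum_mul_add_one_sub {ι : Type*} (s : Finset ι) (w z : ι → ℝ)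
    (hw : ∀ i ∈ s, 0 ≤ w i) (hz : ∀ i ∈ s, 0 ≤ z i) (hW : ∑ i ∈ s, w i ≤ 1) :
    ∏ i ∈ s, z i ^ w i ≤ ∑ i ∈ s, w i * z i + (1 - ∑ i ∈ s, w i) := by
  -- AM-GM on `s` with one extra point `1` carrying the remaining weight
  have := geom_mean_le_arith_mean_weighted (insertNone s)
    (fun i => i.elim (1 - ∑ i ∈ s, w i) w) (fun i => i.elim 1 z)
    (by simpa [Option.forall] using ⟨hW, hw⟩) (by simp) (by simpa [Option.forall] using hz)
  simpa [add_comm] using this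

theorem prod_mul_prod_le_sum_rpow_div_add {α β : Type*} (T : Finset α) (H : Finset β)
    (ξ : α → ℝ) (η : β → ℝ) (hξ : ∀ u ∈ T, 0 ≤ ξ u) (hη : ∀ v ∈ H, 0 ≤ η v)
    {p q : ℝ} (hp : 0 < p) (hq : 0 < q) (hTH : #T / p + #H / q ≤ 1) :
    (∏ u ∈ T, ξ u) * ∏ v ∈ H, η v ≤
      (∑ u ∈ T, ξ u ^ p) / p + (∑ v ∈ H, η v ^ q) / q + (1 - (#T / p + #H / q)) := by
  have := prod_rpow_le_sum_mul_add_one_sub (T.disjSum H)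
    (Sum.elim (fun _ => p⁻¹) (fun _ => q⁻¹)) (Sum.elim (fun u => ξ u ^ p) (fun v => η v ^ q))
    (by simp [hp.le, hq.le]) (by simpa [Sum.forall] using
      ⟨fun u hu => rpow_nonneg (hξ u hu) p, fun v hv => rpow_nonneg (hη v hv) q⟩)
    (by simpa [div_eq_mul_inv] using hTH)
  simp only [prod_disjSum, sum_disjSum, Sum.elim_inl, Sum.elim_inr, sum_const, nsmul_eq_mul]
    at this
  rw [prod_congr rfl fun u hu => rpow_rpow_inv (hξ u hu) hp.ne',
    prod_congr rfl fun v hv => rpow_rpow_inv (hη v hv) hq.ne', ← mul_sum, ← mul_sum] at this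
  convert this using 2 <;> ring

end Real

section Incidence

variable {ι α : Type*} [Fintype ι] [DecidableEq α]

theorem sum_sum_mem_eq_sum_card_filter_mul [Fintype α] (S : ι → Finset α) (g : α → ℝ) :
    ∑ e, ∑ u ∈ S e, g u = ∑ u, #{e | u ∈ S e} * g u := by
  rw [sum_comm' (t' := univ) (s' := fun u => {e | u ∈ S e}) (by simp)]
  simp

noncomputable def degreeVector (S : ι → Finset α) (k : ℕ) (p : ℝ) (u : α) : ℝ :=
  ((#{e | u ∈ S e} : ℝ) / (Fintype.card ι * k)) ^ p⁻¹

variable (S : ι → Finset α) (k : ℕ) {p : ℝ}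

theorem degreeVector_nonneg (u : α) : 0 ≤ degreeVector S k p u := by
  unfold degreeVector; positivity

theorem degreeVector_pos {u : α} {e : ι} (he : u ∈ S e) (hk : 0 < k) :
    0 < degreeVector S k p u := by
  have : 0 < #{e | u ∈ S e} := card_pos.2 ⟨e, by simpa using he⟩
  have : 0 < Fintype.card ι := Fintype.card_pos_iff.2 ⟨e⟩
  unfold degreeVector; positivity

theorem degreeVector_rpow (hp : p ≠ 0) (u : α) :
    degreeVector S k p u ^ p = #{e | u ∈ S e} / (Fintype.card ι * k) := by
  unfold degreeVector; exact Real.rpow_inv_rpow (by positivity) hp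

theorem sum_degreeVector_rpow [Fintype α] (hp : p ≠ 0) (hS : ∀ e, #(S e) = k)
    (hι : 0 < Fintype.card ι) (hk : 0 < k) : ∑ u, degreeVector S k p u ^ p = 1 := by
  have hcount := sum_sum_mem_eq_sum_card_filter_mul S fun _ => 1
  simp only [sum_const, hS, card_univ, nsmul_eq_mul, mul_one] at hcount
  simp only [degreeVector_rpow S k hp, ← sum_div, ← hcount]
  field_simp

theorem sum_sum_div_degreeVector_rpow_le [Fintype α] (hp : 0 < p) {x : α → ℝ}
    (hx : ∀ u, 0 ≤ x u) :
    ∑ e, ∑ u ∈ S e, (x u / degreeVector S k p u) ^ p ≤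
      Fintype.card ι * k * ∑ u, x u ^ p := by
  simp only [Real.div_rpow (hx _) (degreeVector_nonneg S k _), degreeVector_rpow S k hp.ne',
    sum_sum_mem_eq_sum_card_filter_mul, mul_sum]
  refine sum_le_sum fun u _ => ?_
  rcases Nat.eq_zero_or_pos #{e | u ∈ S e} with h | h
  · simp only [h, CharP.cast_eq_zero, zero_mul]
    exact mul_nonneg (by positivity) (Real.rpow_nonneg (hx u) p)
  · rw [div_div_eq_mul_div, mul_div_cancel₀ _ (by exact_mod_cast h.ne'), mul_comm]

end Incidence

namespace DirectedHypergraph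

variable {m n N r s : ℕ} (G : DirectedHypergraph m n N r s)

def arcTerm (x : Fin m → ℝ) (y : Fin n → ℝ) (e : Fin N) : ℝ :=
  (∏ u ∈ G.tail e, x u) * ∏ v ∈ G.head e, y v

theorem pnorm_eq_one_iff {k : ℕ} {p : ℝ} (hp : p ≠ 0) (x : Fin k → ℝ) :
    pnorm p x = 1 ↔ ∑ i, |x i| ^ p = 1 := by
  rw [pnorm, one_div, Real.rpow_inv_eq (by positivity) zero_le_one hp, Real.one_rpow]

theorem arcTerm_eq_mul_arcTerm_div {x x' : Fin m → ℝ} {y y' : Fin n → ℝ} (e : Fin N)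
    (hx' : ∀ u ∈ G.tail e, x' u ≠ 0) (hy' : ∀ v ∈ G.head e, y' v ≠ 0) :
    G.arcTerm x y e = G.arcTerm x' y' e * G.arcTerm (x / x') (y / y') e := by
  simp only [arcTerm, Pi.div_apply, prod_div_distrib]
  rw [mul_mul_mul_comm, mul_div_cancel₀ _ (prod_ne_zero_iff.2 hx'),
    mul_div_cancel₀ _ (prod_ne_zero_iff.2 hy')]

theorem arcTerm_le_arcTerm_abs (x : Fin m → ℝ) (y : Fin n → ℝ) (e : Fin N) :
    G.arcTerm x y e ≤ G.arcTerm (fun u => |x u|) (fun v => |y v|) e := by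
  simpa only [arcTerm, abs_mul, abs_prod] using le_abs_self (G.arcTerm x y e)

theorem arcTerm_abs_le {p q : ℝ} (hp : 0 < p) (hq : 0 < q) (hrs : r / p + s / q ≤ 1)
    (hr : 0 < r) (hs : 0 < s) (x : Fin m → ℝ) (y : Fin n → ℝ) (e : Fin N) :
    G.arcTerm (fun u => |x u|) (fun v => |y v|) e ≤
      G.arcTerm (degreeVector G.tail r p) (degreeVector G.head s q) e *
        ((∑ u ∈ G.tail e, (|x u| / degreeVector G.tail r p u) ^ p) / p +
          (∑ v ∈ G.head e, (|y v| / degreeVector G.head s q v) ^ q) / q +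
          (1 - (r / p + s / q))) := by
  have hx' : ∀ u, 0 ≤ degreeVector G.tail r p u := degreeVector_nonneg _ _
  have hy' : ∀ v, 0 ≤ degreeVector G.head s q v := degreeVector_nonneg _ _
  rw [G.arcTerm_eq_mul_arcTerm_div e (fun u hu => (degreeVector_pos _ _ hu hr).ne')
    (fun v hv => (degreeVector_pos _ _ hv hs).ne')]
  refine mul_le_mul_of_nonneg_left ?_
    (mul_nonneg (prod_nonneg fun u _ => hx' u) (prod_nonneg fun v _ => hy' v))
  have := Real.prod_mul_prod_le_sum_rpow_div_add (G.tail e) (G.head e)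
    (fun u => |x u| / degreeVector G.tail r p u) (fun v => |y v| / degreeVector G.head s q v)
    (fun u _ => div_nonneg (abs_nonneg _) (hx' u)) (fun v _ => div_nonneg (abs_nonneg _) (hy' v))
    hp hq (by rwa [G.tail_card, G.head_card])
  rwa [G.tail_card, G.head_card] at this

theorem polyForm_le_of_arcTerm_degreeVector_eq {p q C : ℝ} (hp : 0 < p) (hq : 0 < q)
    (hrs : r / p + s / q ≤ 1) (hN : 0 < N) (hr : 0 < r) (hs : 0 < s)
    (hC : ∀ e, G.arcTerm (degreeVector G.tail r p) (degreeVector G.head s q) e = C)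
    {x : Fin m → ℝ} {y : Fin n → ℝ} (hx : ∑ u, |x u| ^ p = 1) (hy : ∑ v, |y v| ^ q = 1) :
    G.polyForm x y ≤ N * C := by
  set x' := degreeVector G.tail r p
  set y' := degreeVector G.head s q
  have hC0 : 0 ≤ C := by
    rw [← hC ⟨0, hN⟩]
    exact mul_nonneg (prod_nonneg fun u _ => degreeVector_nonneg _ _ u)
      (prod_nonneg fun v _ => degreeVector_nonneg _ _ v)
  have htail := sum_sum_div_degreeVector_rpow_le G.tail r hp fun u => abs_nonneg (x u)
  have hhead := sum_sum_div_degreeVector_rpow_le G.head s hq fun v => abs_nonneg (y v)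
  rw [Fintype.card_fin] at htail hhead
  calc G.polyForm x y ≤ ∑ e, G.arcTerm (fun u => |x u|) (fun v => |y v|) e :=
        sum_le_sum fun e _ => G.arcTerm_le_arcTerm_abs x y e
    _ ≤ ∑ e, C * ((∑ u ∈ G.tail e, (|x u| / x' u) ^ p) / p +
        (∑ v ∈ G.head e, (|y v| / y' v) ^ q) / q + (1 - (r / p + s / q))) :=
        sum_le_sum fun e _ => hC e ▸ G.arcTerm_abs_le hp hq hrs hr hs x y e
    _ = C * ((∑ e, ∑ u ∈ G.tail e, (|x u| / x' u) ^ p) / p +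
        (∑ e, ∑ v ∈ G.head e, (|y v| / y' v) ^ q) / q + N * (1 - (r / p + s / q))) := by
        rw [← mul_sum, sum_add_distrib, sum_add_distrib, ← sum_div, ← sum_div, sum_const,
          card_univ, Fintype.card_fin, nsmul_eq_mul]
    _ ≤ C * (N * r / p + N * s / q + N * (1 - (r / p + s / q))) := by
        gcongr
        · simpa [hx] using htail
        · simpa [hy] using hhead
    _ = N * C := by field_simp; ring

theorem specRad_eq_of_arcTerm_degreeVector_eq {p q C : ℝ} (hp : 0 < p) (hq : 0 < q)
    (hrs : r / p + s / q ≤ 1) (hN : 0 < N) (hr : 0 < r) (hs : 0 < s)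
    (hC : ∀ e, G.arcTerm (degreeVector G.tail r p) (degreeVector G.head s q) e = C) :
    G.specRad p q = N * C := by
  have hN' : 0 < Fintype.card (Fin N) := by simpa using hN
  refine IsGreatest.csSup_eq
    ⟨⟨degreeVector G.tail r p, degreeVector G.head s q, ?_, ?_, ?_⟩, ?_⟩
  · simp only [pnorm_eq_one_iff hp.ne', abs_of_nonneg (degreeVector_nonneg _ _ _)]
    exact sum_degreeVector_rpow G.tail r hp.ne' G.tail_card hN' hr
  · simp only [pnorm_eq_one_iff hq.ne', abs_of_nonneg (degreeVector_nonneg _ _ _)]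
    exact sum_degreeVector_rpow G.head s hq.ne' G.head_card hN' hs
  · change _ = ∑ e, G.arcTerm _ _ e
    simp [hC]
  · rintro z ⟨x, y, hx, hy, rfl⟩
    exact G.polyForm_le_of_arcTerm_degreeVector_eq hp hq hrs hN hr hs hC
      ((pnorm_eq_one_iff hp.ne' x).1 hx) ((pnorm_eq_one_iff hq.ne' y).1 hy)

structure IsOutHyperstar (c : Fin m) : Prop where
  center_mem_tail : ∀ e, c ∈ G.tail e
  tail_inter_tail : ∀ e f, e ≠ f → G.tail e ∩ G.tail f = {c}
  disjoint_head : ∀ e f, e ≠ f → Disjoint (G.head e) (G.head f)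

namespace IsOutHyperstar

variable {G} {c : Fin m}

theorem card_filter_center_mem_tail (hG : G.IsOutHyperstar c) : #{e | c ∈ G.tail e} = N := by
  simp [hG.center_mem_tail]

theorem card_filter_mem_tail_of_ne (hG : G.IsOutHyperstar c) {e : Fin N} {u : Fin m}
    (hu : u ∈ G.tail e) (huc : u ≠ c) : #{f | u ∈ G.tail f} = 1 := by
  refine card_eq_one.2 ⟨e, eq_singleton_iff_unique_mem.2 ⟨by simpa using hu, fun f hf => ?_⟩⟩
  by_contra hfe
  have := hG.tail_inter_tail f e hfe ▸ mem_inter.2 ⟨(mem_filter.1 hf).2, hu⟩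
  exact huc (mem_singleton.1 this)

theorem card_filter_mem_head (hG : G.IsOutHyperstar c) {e : Fin N} {v : Fin n}
    (hv : v ∈ G.head e) : #{f | v ∈ G.head f} = 1 := by
  refine card_eq_one.2 ⟨e, eq_singleton_iff_unique_mem.2 ⟨by simpa using hv, fun f hf => ?_⟩⟩
  by_contra hfe
  exact disjoint_left.1 (hG.disjoint_head f e hfe) (mem_filter.1 hf).2 hv

theorem arcTerm_degreeVector (hG : G.IsOutHyperstar c) (p q : ℝ) (e : Fin N) :
    G.arcTerm (degreeVector G.tail r p) (degreeVector G.head s q) e =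
      (N / (N * r)) ^ p⁻¹ * ((1 / (N * r)) ^ p⁻¹) ^ (r - 1) * ((1 / (N * s)) ^ q⁻¹) ^ s := by
  have hc := hG.center_mem_tail e
  have htail : ∀ u ∈ (G.tail e).erase c, degreeVector G.tail r p u = (1 / (N * r)) ^ p⁻¹ :=
    fun u hu => by
      simp [degreeVector, hG.card_filter_mem_tail_of_ne (mem_of_mem_erase hu) (ne_of_mem_erase hu)]
  have hhead : ∀ v ∈ G.head e, degreeVector G.head s q v = (1 / (N * s)) ^ q⁻¹ :=
    fun v hv => by simp [degreeVector, hG.card_filter_mem_head hv]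
  rw [arcTerm, ← mul_prod_erase _ _ hc, prod_congr rfl htail, prod_congr rfl hhead, prod_const,
    prod_const, card_erase_of_mem hc, G.tail_card, G.head_card]
  simp [degreeVector, hG.card_filter_center_mem_tail]

open Real in
theorem specRad_eq (hG : G.IsOutHyperstar c) {p q : ℝ} (hp : 0 < p) (hq : 0 < q)
    (hrs : r / p + s / q ≤ 1) (hN : 0 < N) (hr : 0 < r) (hs : 0 < s) :
    G.specRad p q = (N : ℝ) ^ (1 - (((r : ℝ) - 1) / p + (s : ℝ) / q)) /
      ((r : ℝ) ^ ((r : ℝ) / p) * (s : ℝ) ^ ((s : ℝ) / q)) := by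
  rw [G.specRad_eq_of_arcTerm_degreeVector_eq hp hq hrs hN hr hs (hG.arcTerm_degreeVector p q)]
  have hN₀ : (0 : ℝ) < N := by exact_mod_cast hN
  have hr₀ : (0 : ℝ) < r := by exact_mod_cast hr
  have hs₀ : (0 : ℝ) < s := by exact_mod_cast hs
  rw [← rpow_natCast, ← rpow_natCast, ← rpow_mul (by positivity), ← rpow_mul (by positivity),
    Nat.cast_pred hr, div_mul_cancel_left₀ hN₀.ne', one_div, one_div, inv_rpow hr₀.le,
    inv_rpow (by positivity), inv_rpow (by positivity), mul_rpow hN₀.le hr₀.le,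
    mul_rpow hN₀.le hs₀.le, rpow_sub hN₀, rpow_add hN₀, rpow_one]
  have hrr : (r : ℝ) ^ ((r : ℝ) / p) = r ^ p⁻¹ * r ^ (p⁻¹ * (r - 1)) := by
    rw [← rpow_add hr₀]; ring_nf
  rw [hrr, show (r - 1) / p = p⁻¹ * (r - 1) by ring, show (s : ℝ) / q = q⁻¹ * s by ring]
  field_simp

end IsOutHyperstar

end DirectedHypergraph

/-- The `(p,q)`-spectral radius of an out-hyperstar with `N` arcs: all arcs share
exactly the center `c` in their tails and are otherwise vertex-disjoint. If
`r/p + s/q < 1` then `λ_{p,q} = N^{1−((r−1)/p+s/q)}/(r^{r/p} s^{s/q})`, and if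
`r/p + s/q = 1` then `λ_{p,q} = N^{1/p}/(r^{r/p} s^{s/q})`. -/
theorem specRad_out_hyperstar (m n N r s : ℕ) (hr : 0 < r) (hs : 0 < s) (hN : 0 < N)
    (G : DirectedHypergraph m n N r s) (c : Fin m)
    (hc : ∀ e, c ∈ G.tail e)
    (htails : ∀ e f, e ≠ f → G.tail e ∩ G.tail f = {c})
    (hheads : ∀ e f, e ≠ f → Disjoint (G.head e) (G.head f))
    (p q : ℝ) (hp : 1 ≤ p) (hq : 1 ≤ q) :
    ((r : ℝ) / p + (s : ℝ) / q < 1 →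
      G.specRad p q = (N : ℝ) ^ (1 - (((r : ℝ) - 1) / p + (s : ℝ) / q)) /
        ((r : ℝ) ^ ((r : ℝ) / p) * (s : ℝ) ^ ((s : ℝ) / q))) ∧
    ((r : ℝ) / p + (s : ℝ) / q = 1 →
      G.specRad p q = (N : ℝ) ^ (1 / p) /
        ((r : ℝ) ^ ((r : ℝ) / p) * (s : ℝ) ^ ((s : ℝ) / q))) := by
  have hG : G.IsOutHyperstar c := ⟨hc, htails, hheads⟩
  have hspec (hrs : (r : ℝ) / p + s / q ≤ 1) :=
    hG.specRad_eq (by linarith) (by linarith) hrs hN hr hs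
  refine ⟨fun hlt => hspec hlt.le, fun heq => ?_⟩
  have hexp : 1 - (((r : ℝ) - 1) / p + s / q) = 1 / p := by rw [sub_div]; linarith
  rw [hspec heq.le, hexp]
end

section
/- Let G be an (r,s)-directed hypergraph with maximum out-degree Δ⁺ and maximum in-degree Δ⁻. If r/p + s/q ≥ 1, then λ_{p,q}(G) ≤ (Δ⁺/r)^{r/p}(Δ⁻/s)^{s/q}. If r/p + s/q < 1, then λ_{p,q}(G) ≤ |E(G)|^{1−(r/p+s/q)} (Δ⁺/r)^{r/p}(Δ⁻/s)^{s/q}. -/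
/-! For unit vectors `x`, `y` put `P e = (∏ u ∈ T(e), |x u|) ^ (p / r)` and
`Q e = (∏ v ∈ H(e), |y v|) ^ (q / s)`. Each term of the form is then at most
`P e ^ (r / p) * Q e ^ (s / q)`, and AM-GM on each edge followed by double counting gives
`∑ P ≤ Δ⁺ / r` and `∑ Q ≤ Δ⁻ / s`. With `c = r / p` and `d = s / q`, Hölder's inequality
bounds `∑ P ^ c * Q ^ d` by `(∑ P) ^ c * (∑ Q) ^ d` when `c + d ≥ 1` (as `ℓ^1 ⊆ ℓ^(c + d)`
contractively), and by `N ^ (1 - (c + d)) * (∑ P) ^ c * (∑ Q) ^ d` when `c + d < 1`. -/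

open Finset

namespace Real

variable {ι : Type*} (s : Finset ι) {f g : ι → ℝ}

lemma sum_rpow_mul_rpow_le_of_add_eq_one (hf : ∀ i ∈ s, 0 ≤ f i) (hg : ∀ i ∈ s, 0 ≤ g i)
    {c d : ℝ} (hc : 0 < c) (hd : 0 < d) (hcd : c + d = 1) :
    ∑ i ∈ s, f i ^ c * g i ^ d ≤ (∑ i ∈ s, f i) ^ c * (∑ i ∈ s, g i) ^ d := by
  have := inner_le_Lp_mul_Lq_of_nonneg s (HolderConjugate.inv_inv hc hd hcd)
    (fun i hi => rpow_nonneg (hf i hi) c) (fun i hi => rpow_nonneg (hg i hi) d)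
  simp only [one_div, inv_inv] at this
  convert this using 3 <;> refine sum_congr rfl fun i hi => ?_
  · exact (rpow_rpow_inv (hf i hi) hc.ne').symm
  · exact (rpow_rpow_inv (hg i hi) hd.ne').symm

lemma sum_rpow_le_rpow_sum (hf : ∀ i ∈ s, 0 ≤ f i) {σ : ℝ} (hσ : 1 ≤ σ) :
    ∑ i ∈ s, f i ^ σ ≤ (∑ i ∈ s, f i) ^ σ := by
  have hsplit : ∀ x : ℝ, 0 ≤ x → x ^ σ = x ^ (σ - 1) * x := fun x hx => by
    rw [← rpow_add_one' hx (by linarith), sub_add_cancel]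
  calc ∑ i ∈ s, f i ^ σ = ∑ i ∈ s, f i ^ (σ - 1) * f i :=
        sum_congr rfl fun i hi => hsplit _ (hf i hi)
    _ ≤ ∑ i ∈ s, (∑ j ∈ s, f j) ^ (σ - 1) * f i := by
        gcongr with i hi
        · exact hf i hi
        · exact hf i hi
        · exact single_le_sum hf hi
    _ = (∑ i ∈ s, f i) ^ σ := by rw [← mul_sum, ← hsplit _ (sum_nonneg hf)]

lemma sum_rpow_mul_rpow_le_of_one_le_add (hf : ∀ i ∈ s, 0 ≤ f i) (hg : ∀ i ∈ s, 0 ≤ g i)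
    {c d : ℝ} (hc : 0 < c) (hd : 0 < d) (hcd : 1 ≤ c + d) :
    ∑ i ∈ s, f i ^ c * g i ^ d ≤ (∑ i ∈ s, f i) ^ c * (∑ i ∈ s, g i) ^ d := by
  set σ := c + d
  have hσ : 0 < σ := by positivity
  have hf_σ : ∀ i ∈ s, 0 ≤ f i ^ σ := fun i hi => rpow_nonneg (hf i hi) σ
  have hg_σ : ∀ i ∈ s, 0 ≤ g i ^ σ := fun i hi => rpow_nonneg (hg i hi) σ
  have hc_σ : σ * (c / σ) = c := mul_div_cancel₀ c hσ.ne'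
  have hd_σ : σ * (d / σ) = d := mul_div_cancel₀ d hσ.ne'
  calc ∑ i ∈ s, f i ^ c * g i ^ d = ∑ i ∈ s, (f i ^ σ) ^ (c / σ) * (g i ^ σ) ^ (d / σ) := by
        refine sum_congr rfl fun i hi => ?_
        rw [← rpow_mul (hf i hi), ← rpow_mul (hg i hi), hc_σ, hd_σ]
    _ ≤ (∑ i ∈ s, f i ^ σ) ^ (c / σ) * (∑ i ∈ s, g i ^ σ) ^ (d / σ) :=
        sum_rpow_mul_rpow_le_of_add_eq_one s hf_σ hg_σ (by positivity) (by positivity)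
          (by rw [← add_div, div_self hσ.ne'])
    _ ≤ ((∑ i ∈ s, f i) ^ σ) ^ (c / σ) * ((∑ i ∈ s, g i) ^ σ) ^ (d / σ) :=
        mul_le_mul
          (rpow_le_rpow (sum_nonneg hf_σ) (sum_rpow_le_rpow_sum s hf hcd) (by positivity))
          (rpow_le_rpow (sum_nonneg hg_σ) (sum_rpow_le_rpow_sum s hg hcd) (by positivity))
          (rpow_nonneg (sum_nonneg hg_σ) _) (rpow_nonneg (rpow_nonneg (sum_nonneg hf) σ) _)
    _ = (∑ i ∈ s, f i) ^ c * (∑ i ∈ s, g i) ^ d := by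
        rw [← rpow_mul (sum_nonneg hf), ← rpow_mul (sum_nonneg hg), hc_σ, hd_σ]

lemma sum_rpow_le_card_rpow_mul_rpow_sum (hg : ∀ i ∈ s, 0 ≤ g i) {t : ℝ} (ht₀ : 0 < t)
    (ht₁ : t < 1) :
    ∑ i ∈ s, g i ^ t ≤ (#s : ℝ) ^ (1 - t) * (∑ i ∈ s, g i) ^ t := by
  have := sum_rpow_mul_rpow_le_of_add_eq_one s hg (fun _ _ => zero_le_one) ht₀
    (sub_pos.2 ht₁) (add_sub_cancel t 1)
  simpa [mul_comm] using this

lemma sum_rpow_mul_rpow_le_of_add_lt_one (hf : ∀ i ∈ s, 0 ≤ f i) (hg : ∀ i ∈ s, 0 ≤ g i)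
    {c d : ℝ} (hc : 0 < c) (hd : 0 < d) (hcd : c + d < 1) :
    ∑ i ∈ s, f i ^ c * g i ^ d ≤
      (#s : ℝ) ^ (1 - (c + d)) * (∑ i ∈ s, f i) ^ c * (∑ i ∈ s, g i) ^ d := by
  have hc₁ : 0 < 1 - c := by linarith
  set t := d / (1 - c)
  have ht : t * (1 - c) = d := div_mul_cancel₀ d hc₁.ne'
  have hg_t : ∀ i ∈ s, 0 ≤ g i ^ t := fun i hi => rpow_nonneg (hg i hi) t
  have hS_g := sum_nonneg hg
  calc ∑ i ∈ s, f i ^ c * g i ^ d = ∑ i ∈ s, f i ^ c * (g i ^ t) ^ (1 - c) := by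
        refine sum_congr rfl fun i hi => ?_
        rw [← rpow_mul (hg i hi), ht]
    _ ≤ (∑ i ∈ s, f i) ^ c * (∑ i ∈ s, g i ^ t) ^ (1 - c) :=
        sum_rpow_mul_rpow_le_of_add_eq_one s hf hg_t hc hc₁ (add_sub_cancel c 1)
    _ ≤ (∑ i ∈ s, f i) ^ c * ((#s : ℝ) ^ (1 - t) * (∑ i ∈ s, g i) ^ t) ^ (1 - c) := by
        refine mul_le_mul_of_nonneg_left (rpow_le_rpow (sum_nonneg hg_t) ?_ hc₁.le)
          (rpow_nonneg (sum_nonneg hf) c)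
        exact sum_rpow_le_card_rpow_mul_rpow_sum s hg (by positivity)
          ((div_lt_one hc₁).2 (by linarith))
    _ = (#s : ℝ) ^ (1 - (c + d)) * (∑ i ∈ s, f i) ^ c * (∑ i ∈ s, g i) ^ d := by
        rw [mul_rpow (by positivity) (by positivity), ← rpow_mul (by positivity),
          ← rpow_mul hS_g, ht, sub_mul, one_mul, ht]
        ring_nf

end Real

section SetFamily

variable {α ε : Type*} [Fintype α] [Fintype ε] [DecidableEq α] (T : ε → Finset α)

lemma sum_sum_mem_eq_sum_card_mul (b : α → ℝ) :
    ∑ e, ∑ u ∈ T e, b u = ∑ u, (#{e | u ∈ T e} : ℝ) * b u := by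
  rw [sum_comm' (t' := univ) (s' := fun u => {e | u ∈ T e}) (by simp)]
  simp only [sum_const, nsmul_eq_mul]

lemma sum_prod_rpow_inv_le {r : ℕ} (hr : 0 < r) (hT : ∀ e, #(T e) = r) {Δ : ℕ}
    (hΔ : ∀ u, #{e | u ∈ T e} ≤ Δ) {b : α → ℝ} (hb : ∀ u, 0 ≤ b u) :
    ∑ e, (∏ u ∈ T e, b u) ^ (r : ℝ)⁻¹ ≤ Δ / r * ∑ u, b u := by
  have amgm : ∀ e, (∏ u ∈ T e, b u) ^ (r : ℝ)⁻¹ ≤ (∑ u ∈ T e, b u) / r := fun e => by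
    simpa [hT e] using Real.geom_mean_le_arith_mean (T e) (fun _ => 1) b
      (fun _ _ => zero_le_one) (by simpa [hT e] using hr) (fun u _ => hb u)
  calc ∑ e, (∏ u ∈ T e, b u) ^ (r : ℝ)⁻¹ ≤ (∑ e, ∑ u ∈ T e, b u) / r := by
        rw [sum_div]
        exact sum_le_sum fun e _ => amgm e
    _ = (∑ u, (#{e | u ∈ T e} : ℝ) * b u) / r := by rw [sum_sum_mem_eq_sum_card_mul]
    _ ≤ (∑ u, (Δ : ℝ) * b u) / r := by
        gcongr with u
        · exact hb u
        · exact_mod_cast hΔ u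
    _ = Δ / r * ∑ u, b u := by rw [← mul_sum, mul_div_right_comm]

lemma sum_prod_abs_rpow_div_le {r : ℕ} (hr : 0 < r) (hT : ∀ e, #(T e) = r) {Δ : ℕ}
    (hΔ : ∀ u, #{e | u ∈ T e} ≤ Δ) {p : ℝ} {x : α → ℝ} (hx : ∑ u, |x u| ^ p = 1) :
    ∑ e, (∏ u ∈ T e, |x u|) ^ (p / r) ≤ Δ / r := by
  have hpow : ∀ e, (∏ u ∈ T e, |x u|) ^ (p / r) = (∏ u ∈ T e, |x u| ^ p) ^ (r : ℝ)⁻¹ := fun e => by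
    rw [div_eq_mul_inv, Real.rpow_mul (by positivity),
      Real.finsetProd_rpow _ _ fun u _ => abs_nonneg (x u)]
  simp only [hpow]
  simpa [hx] using sum_prod_rpow_inv_le T hr hT hΔ fun u => Real.rpow_nonneg (abs_nonneg (x u)) p

end SetFamily

namespace DirectedHypergraph

variable {m n N r s : ℕ} (G : DirectedHypergraph m n N r s) {p q : ℝ}

lemma sum_abs_rpow_eq_one_of_pnorm_eq_one {k : ℕ} {x : Fin k → ℝ} (hp : 0 < p)
    (hx : pnorm p x = 1) : ∑ i, |x i| ^ p = 1 := by
  rw [pnorm, one_div, Real.rpow_inv_eq (by positivity) zero_le_one hp.ne', Real.one_rpow] at hx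
  exact hx

lemma specRad_le {C : ℝ} (hC : 0 ≤ C)
    (h : ∀ x y, pnorm p x = 1 → pnorm q y = 1 → G.polyForm x y ≤ C) : G.specRad p q ≤ C :=
  Real.sSup_le (fun _ ⟨x, y, hx, hy, hz⟩ => hz ▸ h x y hx hy) hC

lemma specRad_le_of_sum_rpow_mul_rpow_le (hr : 0 < r) (hs : 0 < s) (hp : 0 < p) (hq : 0 < q)
    {Δp Δn : ℕ} (hΔp : ∀ u, G.outDeg u ≤ Δp) (hΔn : ∀ v, G.inDeg v ≤ Δn) {C : ℝ} (hC : 0 ≤ C)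
    (h : ∀ P Q : Fin N → ℝ, (∀ e, 0 ≤ P e) → (∀ e, 0 ≤ Q e) →
      ∑ e, P e ≤ Δp / r → ∑ e, Q e ≤ Δn / s → ∑ e, P e ^ ((r : ℝ) / p) * Q e ^ ((s : ℝ) / q) ≤ C) :
    G.specRad p q ≤ C := by
  refine G.specRad_le hC fun x y hx hy => ?_
  have hP := sum_prod_abs_rpow_div_le G.tail hr G.tail_card hΔp
    (sum_abs_rpow_eq_one_of_pnorm_eq_one hp hx)
  have hQ := sum_prod_abs_rpow_div_le G.head hs G.head_card hΔn
    (sum_abs_rpow_eq_one_of_pnorm_eq_one hq hy)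
  refine (sum_le_sum fun e _ => ?_).trans
    (h _ _ (fun e => by positivity) (fun e => by positivity) hP hQ)
  rw [← inv_div (p : ℝ), ← inv_div (q : ℝ), Real.rpow_rpow_inv (by positivity) (by positivity),
    Real.rpow_rpow_inv (by positivity) (by positivity), ← abs_prod, ← abs_prod, ← abs_mul]
  exact le_abs_self _

end DirectedHypergraph

/-- Upper bounds for the `(p,q)`-spectral radius in terms of the maximum
out-degree `Δ⁺` and maximum in-degree `Δ⁻`: if `r/p + s/q ≥ 1` then
`λ_{p,q}(G) ≤ (Δ⁺/r)^{r/p}(Δ⁻/s)^{s/q}`, and if `r/p + s/q < 1` then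
`λ_{p,q}(G) ≤ |E(G)|^{1−(r/p+s/q)} (Δ⁺/r)^{r/p}(Δ⁻/s)^{s/q}`. -/
theorem specRad_upper_max_degree (m n N r s : ℕ) (hr : 0 < r) (hs : 0 < s)
    (G : DirectedHypergraph m n N r s) (p q : ℝ) (hp : 1 ≤ p) (hq : 1 ≤ q)
    (Δp Δn : ℕ) (hΔp : ∀ u, G.outDeg u ≤ Δp) (hΔn : ∀ v, G.inDeg v ≤ Δn) :
    (1 ≤ (r : ℝ) / p + (s : ℝ) / q →
      G.specRad p q ≤ ((Δp : ℝ) / (r : ℝ)) ^ ((r : ℝ) / p) *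
        ((Δn : ℝ) / (s : ℝ)) ^ ((s : ℝ) / q)) ∧
    ((r : ℝ) / p + (s : ℝ) / q < 1 →
      G.specRad p q ≤ (N : ℝ) ^ (1 - ((r : ℝ) / p + (s : ℝ) / q)) *
        ((Δp : ℝ) / (r : ℝ)) ^ ((r : ℝ) / p) *
        ((Δn : ℝ) / (s : ℝ)) ^ ((s : ℝ) / q)) := by
  have hp₀ : 0 < p := by linarith
  have hq₀ : 0 < q := by linarith
  have hc : 0 < (r : ℝ) / p := by positivity
  have hd : 0 < (s : ℝ) / q := by positivity
  constructor
  · intro hcd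
    refine G.specRad_le_of_sum_rpow_mul_rpow_le hr hs hp₀ hq₀ hΔp hΔn (by positivity)
      fun P Q hP hQ hSP hSQ => ?_
    have : 0 ≤ ∑ e, P e := sum_nonneg fun e _ => hP e
    have : 0 ≤ ∑ e, Q e := sum_nonneg fun e _ => hQ e
    calc ∑ e, P e ^ ((r : ℝ) / p) * Q e ^ ((s : ℝ) / q)
        ≤ (∑ e, P e) ^ ((r : ℝ) / p) * (∑ e, Q e) ^ ((s : ℝ) / q) :=
          Real.sum_rpow_mul_rpow_le_of_one_le_add _ (fun e _ => hP e) (fun e _ => hQ e) hc hd hcd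
      _ ≤ _ := by gcongr
  · intro hcd
    refine G.specRad_le_of_sum_rpow_mul_rpow_le hr hs hp₀ hq₀ hΔp hΔn (by positivity)
      fun P Q hP hQ hSP hSQ => ?_
    have : 0 ≤ ∑ e, P e := sum_nonneg fun e _ => hP e
    have : 0 ≤ ∑ e, Q e := sum_nonneg fun e _ => hQ e
    calc ∑ e, P e ^ ((r : ℝ) / p) * Q e ^ ((s : ℝ) / q)
        ≤ (N : ℝ) ^ (1 - ((r : ℝ) / p + (s : ℝ) / q)) *
            (∑ e, P e) ^ ((r : ℝ) / p) * (∑ e, Q e) ^ ((s : ℝ) / q) := by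
          simpa using Real.sum_rpow_mul_rpow_le_of_add_lt_one univ (fun e _ => hP e)
            (fun e _ => hQ e) hc hd hcd
      _ ≤ _ := by gcongr
end
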